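/- arXiv:2303.04853 — 4 statements merged into one kernel-verified Lean document; each statement's English description precedes it below -/
import Mathlib

section
/- Let n ≥ 0 and k ≥ 3, and let ρ be a k-cocycle on 𝔽₂ⁿ with values in (½ℤ)/ℤ ⊂ 𝕋. Then ρ is a k-coboundary with values in (½ℤ)/ℤ (i.e. there exists F : 𝔽₂ⁿ → (½ℤ)/ℤ with ρ_{h₁,…,h_{k+1}} = ∂_{h₁}⋯∂_{h_{k+1}} F) if and only if ρ is strongly 2-homogeneous, meaning: there exists ψ : 𝔽₂ⁿ × 𝔽₂ⁿ → 𝕋 such that (i) for all x, h₁,…,h_{k+1} ∈ 𝔽₂ⁿ, ρ_{h₁,…,h_{k+1}}(x) = Σ_{ω∈{0,1}^k} (−1)^{k−|ω|} ψ(x + ω·(h₁,…,h_k), x + ω·(h₁,…,h_k) + h_{k+1}), and (ii) for all x, h₁,…,h_k ∈ 𝔽₂ⁿ, Σ_{ω∈{0,1}^{k−1}} (−1)^{|ω|} · 2ψ(x + ω·(h₁,…,h_{k−1}), x + ω·(h₁,…,h_{k−1}) + h_k) = 0 (i.e. 2ψ is a polynomial of degree at most k−2 on the space of 1-cubes of 𝔽₂ⁿ).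 -/
open scoped BigOperators Classical

abbrev Gn (n : ℕ) : Type := Fin n → ZMod 2
abbrev 𝕋 : Type := AddCircle (1 : ℝ)

/-- Discrete derivative `∂_h F = T^h F - F`. -/
def del {G H : Type*} [AddCommGroup G] [AddCommGroup H] (h : G) (F : G → H) : G → H :=
  fun x => F (x + h) - F x

/-- Iterated discrete derivative `∂_{h 0} ⋯ ∂_{h (m-1)} F`. -/
def delIter {G H : Type*} [AddCommGroup G] [AddCommGroup H] {m : ℕ}
    (h : Fin m → G) (F : G → H) : G → H :=
  (List.ofFn h).foldr del F

/-- `F` is a (non-classical) polynomial of degree at most `k` (`k : ℕ`). -/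
def IsPolyN {G H : Type*} [AddCommGroup G] [AddCommGroup H] (k : ℕ) (F : G → H) : Prop :=
  ∀ h : Fin (k + 1) → G, delIter h F = 0

/-!
If `F` is two-torsion, `ψ(x, y) = F y - F x` works. Conversely, put `g_a(x) = ψ(x, x + a)`, so
that `ρ(h, a) = ∂_h g_a` and `2 g_a` has degree `≤ k - 2`. The symmetry of `ρ` makes
`∂_b g_a - ∂_a g_b` of degree `≤ k - 2` and, since `∂_a ∂_a = -∂_a 2` on `𝔽₂ⁿ`, `∂_a ∂_b g_a` of
degree `≤ k - 3`; the cocycle identity makes `a ↦ g_a` additive up to functions of degree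
`≤ k - 1`.

Every `F : 𝔽₂ⁿ → H` is `∑_S c_S ∏_{i ∈ S} xᵢ` with `c_S = ∂_{e_S} F(0)`, and `F` has degree
`≤ d` iff `2^{d+1-|S|} c_S = 0` for all `S ≠ ∅`. Let `F` have the coefficients
`c_T = ∂_{T ∖ {i}} g_{eᵢ}(0)` for `|T| ≥ k + 1` (independent of `i ∈ T` by the first estimate) and
`c_T = 0` otherwise. Then `F` is two-torsion, comparing coefficients shows that `g_a - ∂_a F` has
degree `≤ k - 1`, and hence `ρ(h, a) = ∂_h g_a = ∂_h ∂_a F`.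
-/

section DiscreteDerivative

variable {G H : Type*} [AddCommGroup G] [AddCommGroup H]

def delList (l : List G) (F : G → H) : G → H := l.foldr del F

@[simp] lemma delList_nil (F : G → H) : delList [] F = F := rfl

@[simp] lemma delList_cons (a : G) (l : List G) (F : G → H) :
    delList (a :: l) F = del a (delList l F) := rfl

lemma delList_append (l₁ l₂ : List G) (F : G → H) :
    delList (l₁ ++ l₂) F = delList l₁ (delList l₂ F) :=
  List.foldr_append

lemma delIter_eq_delList {m : ℕ} (h : Fin m → G) (F : G → H) :
    delIter h F = delList (List.ofFn h) F := rfl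

lemma del_add (a : G) (F₁ F₂ : G → H) : del a (F₁ + F₂) = del a F₁ + del a F₂ := by
  funext x; simp only [del, Pi.add_apply]; abel

lemma del_zsmul (a : G) (c : ℤ) (F : G → H) : del a (c • F) = c • del a F := by
  funext x; simp only [del, Pi.smul_apply, smul_sub]

lemma del_comm (a b : G) (F : G → H) : del a (del b F) = del b (del a F) := by
  funext x; simp only [del, add_right_comm x b a]; abel

lemma del_comp_add_right (a b : G) (F : G → H) :
    del a (fun x => F (x + b)) = fun x => del a F (x + b) := by
  funext x; simp only [del, add_right_comm]

@[simp] lemma del_zero (a : G) : del a (0 : G → H) = 0 := by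
  funext x; simp [del]

@[simp] lemma del_zero_left (F : G → H) : del (0 : G) F = 0 := by
  funext x; simp [del]

lemma del_add_left (a b : G) (F : G → H) :
    del (a + b) F = del a F + fun x => del b F (x + a) := by
  funext x; simp only [del, Pi.add_apply, ← add_assoc]; abel

lemma self_add_del (a : G) (F : G → H) : F + del a F = fun x => F (x + a) := by
  funext x; simp [del]

lemma delList_add (l : List G) (F₁ F₂ : G → H) :
    delList l (F₁ + F₂) = delList l F₁ + delList l F₂ := by
  induction l with
  | nil => rfl
  | cons a l ih => rw [delList_cons, ih, del_add]; rfl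

def delListHom (l : List G) : (G → H) →+ (G → H) :=
  AddMonoidHom.mk' (delList l) (delList_add l)

@[simp] lemma delList_zero (l : List G) : delList l (0 : G → H) = 0 :=
  map_zero (delListHom l)

lemma delList_sub (l : List G) (F₁ F₂ : G → H) :
    delList l (F₁ - F₂) = delList l F₁ - delList l F₂ :=
  map_sub (delListHom l) F₁ F₂

lemma delList_neg (l : List G) (F : G → H) : delList l (-F) = -delList l F :=
  map_neg (delListHom l) F

lemma delList_zsmul (l : List G) (c : ℤ) (F : G → H) :
    delList l (c • F) = c • delList l F :=
  map_zsmul (delListHom l) c F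

lemma delList_sum {ι : Type*} (l : List G) (s : Finset ι) (F : ι → G → H) :
    delList l (∑ j ∈ s, F j) = ∑ j ∈ s, delList l (F j) :=
  map_sum (delListHom l) F s

lemma delList_comp_add_right (l : List G) (b : G) (F : G → H) :
    delList l (fun x => F (x + b)) = fun x => delList l F (x + b) := by
  induction l with
  | nil => rfl
  | cons a l ih => rw [delList_cons, ih, del_comp_add_right]; rfl

lemma delList_perm {l₁ l₂ : List G} (h : l₁.Perm l₂) (F : G → H) :
    delList l₁ F = delList l₂ F := by
  induction h with
  | nil => rfl
  | cons a _ ih => simp only [delList_cons, ih]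
  | swap a b l => simp only [delList_cons, del_comm]
  | trans _ _ ih₁ ih₂ => rw [ih₁, ih₂]

lemma delIter_snoc {m : ℕ} (h : Fin m → G) (a : G) (F : G → H) :
    delIter (Fin.snoc h a) F = delIter h (del a F) := by
  simp only [delIter_eq_delList, List.ofFn_succ', List.concat_eq_append, delList_append,
    Fin.snoc_castSucc, Fin.snoc_last]
  rfl

lemma isPolyN_iff_delList (d : ℕ) (F : G → H) :
    IsPolyN d F ↔ ∀ l : List G, l.length = d + 1 → delList l F = 0 := by
  refine ⟨fun hF l hl => ?_, fun hF h => hF _ (List.length_ofFn)⟩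
  rw [← List.ofFn_get l, List.ofFn_congr hl]
  exact hF _

end DiscreteDerivative

section IsPolyN

variable {G H : Type*} [AddCommGroup G] [AddCommGroup H] {d : ℕ} {F F₁ F₂ : G → H}

lemma IsPolyN.delList_eq_zero (hF : IsPolyN d F) {l : List G} (hl : d + 1 ≤ l.length) :
    delList l F = 0 := by
  induction l with
  | nil => simp at hl
  | cons a l ih =>
    rcases (Nat.lt_or_ge l.length (d + 1)) with hlt | hge
    · exact (isPolyN_iff_delList d F).1 hF _ (by simp at hl ⊢; omega)
    · rw [delList_cons, ih hge]; exact funext fun x => sub_self _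

lemma IsPolyN.delList {l : List G} (hF : IsPolyN (d + l.length) F) : IsPolyN d (delList l F) :=
  (isPolyN_iff_delList d _).2 fun l' hl' => by
    rw [← delList_append]; exact hF.delList_eq_zero (by simp [hl'])

lemma IsPolyN.mono {d' : ℕ} (hF : IsPolyN d F) (hd : d ≤ d') : IsPolyN d' F :=
  (isPolyN_iff_delList d' F).2 fun _ hl => hF.delList_eq_zero (by omega)

lemma isPolyN_succ_iff : IsPolyN (d + 1) F ↔ ∀ a : G, IsPolyN d (del a F) := by
  refine ⟨fun hF a h => ?_, fun hF h => ?_⟩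
  · rw [← delIter_snoc]; exact hF _
  · rw [← Fin.snoc_init_self h, delIter_snoc]; exact hF _ _

lemma isPolyN_zero_iff : IsPolyN 0 F ↔ ∀ a : G, del a F = 0 := by
  refine ⟨fun hF a => ?_, fun hF h => ?_⟩
  · simpa using hF.delList_eq_zero (l := [a]) le_rfl
  · simp [delIter_eq_delList, hF]

lemma isPolyN_const (d : ℕ) (c : H) : IsPolyN d (fun _ : G => c) :=
  ((isPolyN_zero_iff (F := fun _ : G => c)).2 fun _ => funext fun _ => sub_self c).mono
    (Nat.zero_le d)

lemma isPolyN_zero (d : ℕ) : IsPolyN d (0 : G → H) := isPolyN_const d 0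

lemma IsPolyN.add (h₁ : IsPolyN d F₁) (h₂ : IsPolyN d F₂) : IsPolyN d (F₁ + F₂) := fun h => by
  rw [delIter_eq_delList, delList_add, ← delIter_eq_delList, ← delIter_eq_delList, h₁ h, h₂ h,
    add_zero]

lemma IsPolyN.neg (hF : IsPolyN d F) : IsPolyN d (-F) := fun h => by
  rw [delIter_eq_delList, delList_neg, ← delIter_eq_delList, hF h, neg_zero]

lemma IsPolyN.sub (h₁ : IsPolyN d F₁) (h₂ : IsPolyN d F₂) : IsPolyN d (F₁ - F₂) :=
  sub_eq_add_neg F₁ F₂ ▸ h₁.add h₂.neg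

lemma IsPolyN.sum {ι : Type*} {s : Finset ι} {F : ι → G → H} (h : ∀ i ∈ s, IsPolyN d (F i)) :
    IsPolyN d (∑ i ∈ s, F i) :=
  Finset.sum_induction F _ (fun _ _ => IsPolyN.add) (isPolyN_zero d) h

lemma IsPolyN.comp_add_right (hF : IsPolyN d F) (b : G) : IsPolyN d (fun x => F (x + b)) :=
  fun h => by
    rw [delIter_eq_delList, delList_comp_add_right, ← delIter_eq_delList, hF h]; rfl

end IsPolyN

lemma ZMod.eq_zero_or_eq_one (z : ZMod 2) : z = 0 ∨ z = 1 := by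
  revert z; decide

section BooleanCube

variable {n d : ℕ} {H : Type*} [AddCommGroup H]

lemma Gn.induction_on {P : Gn n → Prop} (zero : P 0) (single : ∀ i, P (Pi.single i 1))
    (add : ∀ a b, P a → P b → P (a + b)) (a : Gn n) : P a := by
  rw [← Finset.univ_sum_single a]
  refine Finset.sum_induction _ P add zero fun i _ => ?_
  rcases ZMod.eq_zero_or_eq_one (a i) with h | h <;> simp only [h, Pi.single_zero, zero, single]

lemma del_del_self (a : Gn n) (F : Gn n → H) : del a (del a F) = -del a ((2 : ℤ) • F) := by
  funext x
  simp only [del, Pi.smul_apply, Pi.neg_apply, add_assoc, ZModModule.add_self, add_zero]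
  abel

lemma IsPolyN.two_zsmul {F : Gn n → H} (hF : IsPolyN (d + 1) F) : IsPolyN d ((2 : ℤ) • F) := by
  induction d generalizing F with
  | zero =>
    refine isPolyN_zero_iff.2 fun a => ?_
    rw [← neg_eq_zero, ← del_del_self, isPolyN_zero_iff.1 (isPolyN_succ_iff.1 hF a)]
  | succ d ih =>
    refine isPolyN_succ_iff.2 fun a => ?_
    rw [del_zsmul]
    exact ih (isPolyN_succ_iff.1 hF a)

lemma IsPolyN.pow_two_zsmul_del {F : Gn n → H} (hF : IsPolyN d F) (a : Gn n) :
    (2 : ℤ) ^ d • del a F = 0 := by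
  induction d generalizing F with
  | zero => rw [pow_zero, one_smul, isPolyN_zero_iff.1 hF]
  | succ d ih => rw [pow_succ, mul_smul, ← del_zsmul, ih hF.two_zsmul]

lemma isPolyN_succ_of_del_single {F : Gn n → H}
    (hF : ∀ i, IsPolyN d (del (Pi.single i 1) F)) : IsPolyN (d + 1) F := by
  refine isPolyN_succ_iff.2 (Gn.induction_on ?_ hF fun a b ha hb => ?_)
  · rw [del_zero_left]; exact isPolyN_zero d
  · rw [del_add_left]; exact ha.add (hb.comp_add_right a)

end BooleanCube

lemma pow_zsmul_eq_zero_of_le {H : Type*} [AddCommGroup H] {a : ℤ} {c : H} {e e' : ℕ}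
    (he : e ≤ e') (hc : a ^ e • c = 0) : a ^ e' • c = 0 := by
  rw [← Nat.sub_add_cancel he, pow_add, mul_smul, hc, smul_zero]

section Coefficients

variable {n d : ℕ} {H : Type*} [AddCommGroup H]

/-- `delSet S F 0` is the coefficient of the monomial `∏_{i ∈ S} xᵢ` in `F`. -/
noncomputable def delSet (S : Finset (Fin n)) (F : Gn n → H) : Gn n → H :=
  delList (S.toList.map fun i => Pi.single i 1) F

@[simp] lemma delSet_empty (F : Gn n → H) : delSet ∅ F = F := by
  simp [delSet]

lemma delSet_insert {i : Fin n} {S : Finset (Fin n)} (hi : i ∉ S) (F : Gn n → H) :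
    delSet (insert i S) F = del (Pi.single i 1) (delSet S F) := by
  rw [delSet, delSet, delList_perm ((Finset.toList_insert hi).map _)]; rfl

lemma delSet_insert' {i : Fin n} {S : Finset (Fin n)} (hi : i ∉ S) (F : Gn n → H) :
    delSet (insert i S) F = delSet S (del (Pi.single i 1) F) := by
  rw [delSet, delSet, delList_perm (((Finset.toList_insert hi).map _).trans
    (List.perm_append_singleton _ _).symm), delList_append]; rfl

lemma delSet_add (S : Finset (Fin n)) (F₁ F₂ : Gn n → H) :
    delSet S (F₁ + F₂) = delSet S F₁ + delSet S F₂ := delList_add _ _ _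

lemma delSet_sub (S : Finset (Fin n)) (F₁ F₂ : Gn n → H) :
    delSet S (F₁ - F₂) = delSet S F₁ - delSet S F₂ := delList_sub _ _ _

lemma delSet_zsmul (S : Finset (Fin n)) (c : ℤ) (F : Gn n → H) :
    delSet S (c • F) = c • delSet S F := delList_zsmul _ _ _

lemma delSet_sum {ι : Type*} (S : Finset (Fin n)) (s : Finset ι) (F : ι → Gn n → H) :
    delSet S (∑ j ∈ s, F j) = ∑ j ∈ s, delSet S (F j) := delList_sum _ _ _

@[simp] lemma delSet_zero (S : Finset (Fin n)) : delSet S (0 : Gn n → H) = 0 := delList_zero _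

lemma zsmul_delSet_apply (S : Finset (Fin n)) (m : ℤ) (F : Gn n → H) (x : Gn n) :
    m • delSet S F x = delSet S (m • F) x := by
  rw [delSet_zsmul]; rfl

lemma IsPolyN.delSet_eq_zero {F : Gn n → H} (hF : IsPolyN d F) {S : Finset (Fin n)}
    (hS : d + 1 ≤ S.card) : delSet S F = 0 :=
  hF.delList_eq_zero (by simpa using hS)

lemma IsPolyN.delSet {F : Gn n → H} {S : Finset (Fin n)} (hF : IsPolyN (d + S.card) F) :
    IsPolyN d (delSet S F) :=
  IsPolyN.delList (by simpa using hF)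

def monomialFn (S : Finset (Fin n)) (c : H) (x : Gn n) : H := (∏ i ∈ S, x i).val • c

@[simp] lemma monomialFn_zero (S : Finset (Fin n)) : monomialFn S (0 : H) = 0 := by
  funext x; simp [monomialFn]

lemma monomialFn_empty (c : H) : monomialFn (∅ : Finset (Fin n)) c = fun _ => c := by
  funext x; simp [monomialFn, ZMod.val_one]

lemma monomialFn_apply_zero (S : Finset (Fin n)) (c : H) :
    monomialFn S c 0 = if S = ∅ then c else 0 := by
  rcases S.eq_empty_or_nonempty with rfl | ⟨i, hi⟩
  · simp [monomialFn, ZMod.val_one]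
  · simp [monomialFn, Finset.prod_eq_zero hi, Finset.ne_empty_of_mem hi]

lemma del_single_monomialFn (i : Fin n) (S : Finset (Fin n)) (c : H) :
    del (Pi.single i 1) (monomialFn S c) =
      if i ∈ S then monomialFn (S.erase i) c - monomialFn S ((2 : ℤ) • c) else 0 := by
  funext x
  have hfix : ∀ j ∈ S.erase i, (x + Pi.single i 1 : Gn n) j = x j := fun j hj => by
    simp [Finset.ne_of_mem_erase hj]
  split_ifs with hi
  · simp only [del, monomialFn, Pi.sub_apply, ← Finset.mul_prod_erase S _ hi,
      Finset.prod_congr rfl hfix]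
    simp only [Pi.add_apply, Pi.single_eq_same]
    generalize ∏ j ∈ S.erase i, x j = p
    rcases ZMod.eq_zero_or_eq_one (x i) with h | h <;>
      rcases ZMod.eq_zero_or_eq_one p with rfl | rfl <;> simp [h, two_smul, ZModModule.add_self]
  · simp only [del, monomialFn, Pi.zero_apply]
    rw [Finset.prod_congr rfl fun j hj => hfix j (Finset.mem_erase.2 ⟨fun h => hi (h ▸ hj), hj⟩),
      sub_self]

lemma delSet_monomialFn_apply_zero (S T : Finset (Fin n)) (c : H) :
    delSet S (monomialFn T c) 0 = if S = T then c else 0 := by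
  induction S using Finset.induction_on generalizing T c with
  | empty => simp [monomialFn_apply_zero, eq_comm]
  | @insert i S hi ih =>
    rw [delSet_insert' hi, del_single_monomialFn]
    by_cases hiT : i ∈ T
    · rw [if_pos hiT]
      have hST : S ≠ T := fun h => hi (h ▸ hiT)
      have hiff : S = T.erase i ↔ insert i S = T :=
        ⟨fun h => h ▸ Finset.insert_erase hiT, fun h => h ▸ (Finset.erase_insert hi).symm⟩
      simp only [delSet_sub, Pi.sub_apply, ih, hST, if_false, sub_zero, hiff]
    · have hST : insert i S ≠ T := fun h => hiT (h ▸ Finset.mem_insert_self i S)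
      simp [hiT, hST]

lemma isPolyN_monomialFn (S : Finset (Fin n)) {c : H}
    (hc : S.Nonempty → (2 : ℤ) ^ (d + 1 - S.card) • c = 0) : IsPolyN d (monomialFn S c) := by
  induction d generalizing S c with
  | zero =>
    rcases S.eq_empty_or_nonempty with rfl | hS
    · rw [monomialFn_empty]; exact isPolyN_const 0 c
    · have hc0 : c = 0 := by
        simpa [Nat.sub_eq_zero_of_le (Finset.card_pos.2 hS)] using hc hS
      rw [hc0, monomialFn_zero]; exact isPolyN_zero 0
  | succ d ih =>
    refine isPolyN_succ_of_del_single fun i => ?_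
    rw [del_single_monomialFn]
    split_ifs with hi
    · have hcard := Finset.card_pos.2 ⟨i, hi⟩
      refine (ih _ fun _ => ?_).sub (ih _ fun _ => ?_)
      · exact pow_zsmul_eq_zero_of_le (by rw [Finset.card_erase_of_mem hi]; omega) (hc ⟨i, hi⟩)
      · rw [smul_smul, ← pow_succ]
        exact pow_zsmul_eq_zero_of_le (by omega) (hc ⟨i, hi⟩)
    · exact isPolyN_zero d

noncomputable def ofCoeff (c : Finset (Fin n) → H) : Gn n → H := ∑ S, monomialFn S (c S)

lemma delSet_ofCoeff_apply_zero (c : Finset (Fin n) → H) (S : Finset (Fin n)) :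
    delSet S (ofCoeff c) 0 = c S := by
  simp [ofCoeff, delSet_sum, Finset.sum_apply, delSet_monomialFn_apply_zero]

lemma zsmul_ofCoeff_eq_zero {m : ℤ} {c : Finset (Fin n) → H} (hc : ∀ S, m • c S = 0) :
    m • ofCoeff c = 0 := by
  funext x
  simp [ofCoeff, monomialFn, Finset.smul_sum, smul_comm m, hc]

lemma sum_powerset_delSet_apply_zero (U : Finset (Fin n)) (F : Gn n → H) :
    ∑ S ∈ U.powerset, delSet S F 0 = F (∑ i ∈ U, Pi.single i 1) := by
  induction U using Finset.induction_on generalizing F with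
  | empty => simp
  | @insert i U hi ih =>
    have hins : ∀ S ∈ U.powerset, delSet (insert i S) F 0 = delSet S (del (Pi.single i 1) F) 0 :=
      fun S hS => by rw [delSet_insert' fun h => hi (Finset.mem_powerset.1 hS h)]
    rw [Finset.sum_powerset_insert hi, Finset.sum_congr rfl hins, ← Finset.sum_add_distrib]
    have hshift : ∀ S ∈ U.powerset, delSet S F 0 + delSet S (del (Pi.single i 1) F) 0 =
        delSet S (fun x => F (x + Pi.single i 1)) 0 := fun S _ => by
      rw [← self_add_del, delSet_add]; rfl
    rw [Finset.sum_congr rfl hshift, ih, Finset.sum_insert hi, add_comm]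

lemma ofCoeff_delSet (F : Gn n → H) : ofCoeff (fun S => delSet S F 0) = F := by
  funext x
  set U := Finset.univ.filter (x · = 1)
  have hx : x = ∑ i ∈ U, Pi.single i 1 := by
    funext j
    rcases ZMod.eq_zero_or_eq_one (x j) with h | h <;>
      simp [Finset.sum_apply, Pi.single_apply, U, h]
  have hmono : ∀ S c, monomialFn S c x = if S ⊆ U then c else (0 : H) := by
    intro S c
    split_ifs with hSU
    · have hprod : ∏ i ∈ S, x i = 1 :=
        Finset.prod_eq_one fun i hi => (Finset.mem_filter.1 (hSU hi)).2
      simp [monomialFn, hprod, ZMod.val_one]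
    · obtain ⟨i, hiS, hiU⟩ := Finset.not_subset.1 hSU
      have hxi : x i = 0 := (ZMod.eq_zero_or_eq_one (x i)).resolve_right (by simpa [U] using hiU)
      simp [monomialFn, Finset.prod_eq_zero hiS hxi]
  have hpow : Finset.univ.filter (· ⊆ U) = U.powerset := by ext; simp
  rw [ofCoeff, Finset.sum_apply, Finset.sum_congr rfl fun S _ => hmono S _, ← Finset.sum_filter,
    hpow, sum_powerset_delSet_apply_zero, ← hx]

lemma isPolyN_iff_delSet_torsion {F : Gn n → H} :
    IsPolyN d F ↔
      ∀ S : Finset (Fin n), S.Nonempty → (2 : ℤ) ^ (d + 1 - S.card) • delSet S F 0 = 0 := by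
  refine ⟨fun hF S ⟨i, hi⟩ => ?_, fun hF => ?_⟩
  · have hS : delSet S F = del (Pi.single i 1) (delSet (S.erase i) F) := by
      rw [← delSet_insert (Finset.notMem_erase i S), Finset.insert_erase hi]
    have hpoly : IsPolyN (d + 1 - S.card) (delSet (S.erase i) F) :=
      (hF.mono (by rw [Finset.card_erase_of_mem hi]; omega)).delSet
    rw [hS, ← Pi.smul_apply, hpoly.pow_two_zsmul_del]
    rfl
  · rw [← ofCoeff_delSet F]
    exact IsPolyN.sum fun S _ => isPolyN_monomialFn S (hF S)

end Coefficients

section AlternatingSum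

variable {n : ℕ} {H : Type*} [AddCommGroup H]

lemma sum_val_le {m : ℕ} (ω : Gn m) : ∑ i, (ω i).val ≤ m := by
  simpa using Finset.sum_le_card_nsmul Finset.univ (fun i => (ω i).val) 1
    fun i _ => Nat.le_of_lt_succ (ZMod.val_lt (ω i))

lemma neg_one_pow_sub {m s : ℕ} (h : s ≤ m) : (-1 : ℤ) ^ (m - s) = (-1) ^ m * (-1) ^ s := by
  rw [← pow_add, show m + s = m - s + 2 * s by omega, pow_add, pow_mul]
  simp

lemma ZMod.sum_univ_two {M : Type*} [AddCommMonoid M] (f : ZMod 2 → M) :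
    ∑ e, f e = f 0 + f 1 :=
  Fin.sum_univ_two f

lemma delIter_apply_eq_sum {m : ℕ} (h : Fin m → Gn n) (F : Gn n → H) (x : Gn n) :
    delIter h F x =
      ∑ ω : Gn m, ((-1 : ℤ) ^ (m - ∑ i, (ω i).val)) • F (x + ∑ i, ω i • h i) := by
  induction m generalizing F with
  | zero => simp [delIter_eq_delList]
  | succ m ih =>
    obtain ⟨h, a, rfl⟩ : ∃ h' a, h = Fin.snoc h' a := ⟨_, _, (Fin.snoc_init_self h).symm⟩
    rw [delIter_snoc, ih, ← (Fin.snocEquiv fun _ => ZMod 2).sum_comp,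
      Fintype.sum_prod_type, ZMod.sum_univ_two]
    simp only [Fin.snocEquiv_apply, Fin.sum_univ_castSucc, Fin.snoc_castSucc, Fin.snoc_last]
    rw [← Finset.sum_add_distrib]
    refine Finset.sum_congr rfl fun ω _ => ?_
    have hs := sum_val_le ω
    generalize ∑ i, (ω i).val = s at hs ⊢
    rw [ZMod.val_zero, ZMod.val_one, zero_smul, one_smul, add_zero, add_zero,
      show m + 1 - s = m - s + 1 by omega, Nat.add_sub_add_right, pow_succ, mul_neg_one,
      neg_smul, del, smul_sub, add_assoc]
    abel

lemma delIter_apply_eq_neg_one_pow_smul_sum {m : ℕ} (h : Fin m → Gn n) (F : Gn n → H) (x : Gn n) :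
    delIter h F x =
      (-1 : ℤ) ^ m • ∑ ω : Gn m, ((-1 : ℤ) ^ ∑ i, (ω i).val) • F (x + ∑ i, ω i • h i) := by
  rw [delIter_apply_eq_sum, Finset.smul_sum]
  refine Finset.sum_congr rfl fun ω _ => ?_
  rw [neg_one_pow_sub (sum_val_le ω), mul_smul]

end AlternatingSum

lemma Fin.snoc_snoc_comp_swap {α : Type*} {m : ℕ} (X : Fin m → α) (a b : α) :
    (Fin.snoc (Fin.snoc X a) b : Fin (m + 2) → α) ∘
        Equiv.swap (Fin.last (m + 1)) (Fin.last m).castSucc =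
      Fin.snoc (Fin.snoc X b) a := by
  funext i
  induction i using Fin.lastCases with
  | last => simp
  | cast i =>
    induction i using Fin.lastCases with
    | last => simp
    | cast i =>
      rw [Function.comp_apply, Equiv.swap_apply_of_ne_of_ne (Fin.castSucc_ne_last _)
        (Fin.castSucc_injective _ |>.ne (Fin.castSucc_ne_last _))]
      simp

structure IsCocycle {G H : Type*} [AddCommGroup G] [AddCommGroup H] {m : ℕ}
    (ρ : (Fin (m + 1) → G) → G → H) : Prop where
  symm : ∀ (h : Fin (m + 1) → G) (σ : Equiv.Perm (Fin (m + 1))), ρ (h ∘ σ) = ρ h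
  add_left : ∀ (h : Fin (m + 1) → G) (h' : G),
    ρ (Function.update h 0 (h 0 + h')) = ρ h + fun x => ρ (Function.update h 0 h') (x + h 0)

namespace IsCocycle

variable {G H : Type*} [AddCommGroup G] [AddCommGroup H] {m : ℕ}
  {ρ : (Fin (m + 1) → G) → G → H}

lemma snoc_eq_cons (hρ : IsCocycle ρ) (h : Fin m → G) (a : G) :
    ρ (Fin.snoc h a) = ρ (Fin.cons a h) := by
  rw [Fin.snoc_eq_cons_rotate]; exact hρ.symm _ _

lemma snoc_add (hρ : IsCocycle ρ) (h : Fin m → G) (a b : G) :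
    ρ (Fin.snoc h (a + b)) = ρ (Fin.snoc h a) + fun x => ρ (Fin.snoc h b) (x + a) := by
  simpa only [hρ.snoc_eq_cons, Fin.cons_zero, Fin.update_cons_zero] using
    hρ.add_left (Fin.cons a h) b

lemma snoc_snoc_comm {ρ : (Fin (m + 1 + 1) → G) → G → H} (hρ : IsCocycle ρ)
    (h : Fin m → G) (a b : G) :
    ρ (Fin.snoc (Fin.snoc h a) b) = ρ (Fin.snoc (Fin.snoc h b) a) := by
  rw [← Fin.snoc_snoc_comp_swap, hρ.symm]

end IsCocycle

section CocycleEstimates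

variable {G H : Type*} [AddCommGroup G] [AddCommGroup H] {K : ℕ}
  {ρ : (Fin (K + 3 + 1) → G) → G → H} {g : G → G → H}

lemma IsCocycle.isPolyN_del_sub_del (hρ : IsCocycle ρ)
    (hg : ∀ (h : Fin (K + 3) → G) (a : G), delIter h (g a) = ρ (Fin.snoc h a)) (a b : G) :
    IsPolyN (K + 1) (del b (g a) - del a (g b)) := fun h => by
  rw [delIter_eq_delList, delList_sub, ← delIter_eq_delList, ← delIter_eq_delList,
    ← delIter_snoc, ← delIter_snoc, hg, hg, hρ.snoc_snoc_comm, sub_self]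

lemma IsCocycle.isPolyN_add_sub_sub (hρ : IsCocycle ρ)
    (hg : ∀ (h : Fin (K + 3) → G) (a : G), delIter h (g a) = ρ (Fin.snoc h a)) (a b : G) :
    IsPolyN (K + 2) (g (a + b) - g a - fun x => g b (x + a)) := fun h => by
  rw [delIter_eq_delList, delList_sub, delList_sub, delList_comp_add_right]
  simp only [← delIter_eq_delList, hg, hρ.snoc_add]
  abel

end CocycleEstimates

section Primitive

variable {n K : ℕ} {H : Type*} [AddCommGroup H]
  {ρ : (Fin (K + 3 + 1) → Gn n) → Gn n → H} {g : Gn n → Gn n → H}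

lemma IsCocycle.isPolyN_del_del (hρ : IsCocycle ρ)
    (hg : ∀ (h : Fin (K + 3) → Gn n) (a : Gn n), delIter h (g a) = ρ (Fin.snoc h a))
    (h2g : ∀ a, IsPolyN (K + 1) ((2 : ℤ) • g a)) (a b : Gn n) :
    IsPolyN K (del a (del b (g a))) := fun h => by
  rw [← delIter_snoc, ← delIter_snoc, hg, hρ.snoc_snoc_comm, ← hg, delIter_snoc, delIter_snoc,
    del_del_self, delIter_eq_delList, delList_neg, ← delIter_eq_delList, ← delIter_snoc, h2g,
    neg_zero]

lemma delSet_erase_eq_of_isPolyN_del_sub_del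
    (hcomm : ∀ a b, IsPolyN (K + 1) (del b (g a) - del a (g b))) {T : Finset (Fin n)}
    (hT : K + 4 ≤ T.card) {i j : Fin n} (hi : i ∈ T) (hj : j ∈ T) :
    delSet (T.erase i) (g (Pi.single i 1)) 0 = delSet (T.erase j) (g (Pi.single j 1)) 0 := by
  rcases eq_or_ne i j with rfl | hij
  · rfl
  have hjTi : j ∈ T.erase i := Finset.mem_erase.2 ⟨hij.symm, hj⟩
  have hR : K + 1 + 1 ≤ ((T.erase i).erase j).card := by
    rw [Finset.card_erase_of_mem hjTi, Finset.card_erase_of_mem hi]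
    omega
  have hTi : T.erase i = insert j ((T.erase i).erase j) := (Finset.insert_erase hjTi).symm
  have hTj : T.erase j = insert i ((T.erase i).erase j) := by
    rw [Finset.erase_right_comm, Finset.insert_erase (Finset.mem_erase.2 ⟨hij, hi⟩)]
  rw [hTi, hTj, delSet_insert' (Finset.notMem_erase j _), delSet_insert' (by simp), ← sub_eq_zero,
    ← Pi.sub_apply, ← delSet_sub, (hcomm _ _).delSet_eq_zero hR]
  rfl

variable (K g) in
noncomputable def cocyclePrimitive : Gn n → H :=
  ofCoeff fun T => if hT : K + 4 ≤ T.card then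
    delSet (T.erase (T.min' (Finset.card_pos.1 (by omega))))
      (g (Pi.single (T.min' (Finset.card_pos.1 (by omega))) 1)) 0
  else 0

lemma delSet_cocyclePrimitive_apply_zero
    (hcomm : ∀ a b, IsPolyN (K + 1) (del b (g a) - del a (g b))) {T : Finset (Fin n)}
    (hT : K + 4 ≤ T.card) {i : Fin n} (hi : i ∈ T) :
    delSet T (cocyclePrimitive K g) 0 = delSet (T.erase i) (g (Pi.single i 1)) 0 := by
  rw [cocyclePrimitive, delSet_ofCoeff_apply_zero, dif_pos hT]
  exact delSet_erase_eq_of_isPolyN_del_sub_del hcomm hT (Finset.min'_mem _ _) hi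

lemma two_zsmul_cocyclePrimitive (h2g : ∀ a, IsPolyN (K + 1) ((2 : ℤ) • g a)) :
    (2 : ℤ) • cocyclePrimitive K g = 0 :=
  zsmul_ofCoeff_eq_zero fun T => by
    split_ifs with hT
    · rw [zsmul_delSet_apply, (h2g _).delSet_eq_zero]
      · rfl
      · rw [Finset.card_erase_of_mem (Finset.min'_mem _ _)]; omega
    · exact smul_zero _

lemma isPolyN_sub_del_single_cocyclePrimitive
    (hcomm : ∀ a b, IsPolyN (K + 1) (del b (g a) - del a (g b)))
    (hdiag : ∀ a b, IsPolyN K (del a (del b (g a))))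
    (h2g : ∀ a, IsPolyN (K + 1) ((2 : ℤ) • g a)) (i : Fin n) :
    IsPolyN (K + 2) (g (Pi.single i 1) - del (Pi.single i 1) (cocyclePrimitive K g)) := by
  set F := cocyclePrimitive K g
  set v : Gn n := Pi.single i 1
  have hF2 : (2 : ℤ) • F = 0 := two_zsmul_cocyclePrimitive h2g
  refine isPolyN_iff_delSet_torsion.2 fun S hS => ?_
  rw [delSet_sub, Pi.sub_apply, smul_sub, sub_eq_zero]
  by_cases hSc : K + 3 ≤ S.card
  · congr 1
    by_cases hi : i ∈ S
    · obtain ⟨j, hj⟩ : (S.erase i).Nonempty :=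
        Finset.card_pos.1 (by rw [Finset.card_erase_of_mem hi]; omega)
      have hg0 : delSet S (g v) = 0 := by
        rw [← Finset.insert_erase hi, delSet_insert' (Finset.notMem_erase i _),
          ← Finset.insert_erase hj, delSet_insert' (Finset.notMem_erase j _), del_comm,
          (hdiag _ _).delSet_eq_zero]
        rw [Finset.card_erase_of_mem hj, Finset.card_erase_of_mem hi]; omega
      have hF0 : delSet S (del v F) = 0 := by
        rw [← Finset.insert_erase hi, delSet_insert' (Finset.notMem_erase i _), del_del_self, hF2,
          del_zero, neg_zero, delSet_zero]
      rw [hg0, hF0]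
    · rw [← delSet_insert' hi, delSet_cocyclePrimitive_apply_zero hcomm
        (by rw [Finset.card_insert_of_notMem hi]; omega) (Finset.mem_insert_self i S),
        Finset.erase_insert hi]
  · rw [show K + 2 + 1 - S.card = K + 1 + 1 - S.card + 1 by omega, pow_succ, mul_smul, mul_smul,
      zsmul_delSet_apply S 2, zsmul_delSet_apply S 2, ← del_zsmul, hF2, del_zero, delSet_zero,
      isPolyN_iff_delSet_torsion.1 (h2g v) S hS]
    simp

lemma isPolyN_sub_del_of_single {d : ℕ} {F : Gn n → H}
    (hadd : ∀ a b, IsPolyN d (g (a + b) - g a - fun x => g b (x + a)))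
    (hsingle : ∀ i, IsPolyN d (g (Pi.single i 1) - del (Pi.single i 1) F)) (a : Gn n) :
    IsPolyN d (g a - del a F) := by
  refine Gn.induction_on (P := fun a => IsPolyN d (g a - del a F)) ?_ hsingle
    (fun a b ha hb => ?_) a
  · have h00 : g (0 + 0) - g 0 - (fun x => g 0 (x + 0)) = -(g 0 - del 0 F) := by
      funext x; simp
    simpa [h00] using (hadd 0 0).neg
  · have hab : g (a + b) - del (a + b) F = (g a - del a F) + (fun x => (g b - del b F) (x + a)) +
        (g (a + b) - g a - fun x => g b (x + a)) := by
      funext x; simp only [del_add_left, Pi.add_apply, Pi.sub_apply]; abel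
    rw [hab]
    exact (ha.add (hb.comp_add_right a)).add (hadd a b)

end Primitive

theorem IsCocycle.exists_two_torsion_coboundary {n K : ℕ} {H : Type*} [AddCommGroup H]
    {ρ : (Fin (K + 3 + 1) → Gn n) → Gn n → H} {g : Gn n → Gn n → H} (hρ : IsCocycle ρ)
    (hg : ∀ (h : Fin (K + 3) → Gn n) (a : Gn n), delIter h (g a) = ρ (Fin.snoc h a))
    (h2g : ∀ a, IsPolyN (K + 1) ((2 : ℤ) • g a)) :
    ∃ F : Gn n → H, (2 : ℤ) • F = 0 ∧ ∀ h, ρ h = delIter h F := by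
  set F := cocyclePrimitive K g
  have hsingle := isPolyN_sub_del_single_cocyclePrimitive (hρ.isPolyN_del_sub_del hg)
    (hρ.isPolyN_del_del hg h2g) h2g
  have hQ : ∀ a, IsPolyN (K + 2) (g a - del a F) :=
    isPolyN_sub_del_of_single (hρ.isPolyN_add_sub_sub hg) hsingle
  refine ⟨F, two_zsmul_cocyclePrimitive h2g, fun h => ?_⟩
  rw [← Fin.snoc_init_self h, ← hg, delIter_snoc, ← sub_add_cancel (g _) (del _ F),
    delIter_eq_delList, delList_add, ← delIter_eq_delList, hQ, zero_add, delIter_eq_delList]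

theorem strongly_two_homogeneous_iff_coboundary_general
    (n k : ℕ) (hk : 3 ≤ k) (ρ : (Fin (k + 1) → Gn n) → Gn n → 𝕋)
    (hsymm : ∀ (h : Fin (k + 1) → Gn n) (σ : Equiv.Perm (Fin (k + 1))), ρ (h ∘ σ) = ρ h)
    (hcoc : ∀ (h : Fin (k + 1) → Gn n) (h' : Gn n),
      ρ (Function.update h 0 (h 0 + h')) =
        ρ h + (fun x => ρ (Function.update h 0 h') (x + h 0))) :
    (∃ F : Gn n → 𝕋, (∀ x, (2 : ℤ) • F x = 0) ∧ ∀ h, ρ h = delIter h F) ↔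
    (∃ ψ : Gn n → Gn n → 𝕋,
      (∀ (h : Fin k → Gn n) (hl x : Gn n),
        ρ (Fin.snoc h hl) x =
          ∑ ω : Gn k, ((-1 : ℤ) ^ (k - ∑ i, (ω i).val)) •
            ψ (x + ∑ i, ω i • h i) (x + ∑ i, ω i • h i + hl)) ∧
      (∀ (h : Fin (k - 1) → Gn n) (hl x : Gn n),
        ∑ ω : Gn (k - 1), ((-1 : ℤ) ^ (∑ i, (ω i).val)) •
          ((2 : ℤ) • ψ (x + ∑ i, ω i • h i) (x + ∑ i, ω i • h i + hl)) = 0)) := by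
  obtain ⟨K, rfl⟩ : ∃ K, k = K + 3 := ⟨k - 3, by omega⟩
  constructor
  · rintro ⟨F, hF2, hρF⟩
    refine ⟨fun x y => F y - F x, fun h hl x => ?_, fun h hl x => ?_⟩
    · rw [hρF, delIter_snoc, delIter_apply_eq_sum]; rfl
    · simp [smul_sub, hF2]
  · rintro ⟨ψ, hρψ, h2ψ⟩
    obtain ⟨F, hF2, hρF⟩ := IsCocycle.exists_two_torsion_coboundary (g := fun a x => ψ x (x + a))
      ⟨hsymm, hcoc⟩ (fun h a => funext fun x => by rw [delIter_apply_eq_sum, hρψ])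
      (fun a h => funext fun x => by
        rw [delIter_apply_eq_neg_one_pow_smul_sum]
        exact (congrArg _ (h2ψ h a x)).trans (smul_zero _))
    exact ⟨F, fun x => congrFun hF2 x, hρF⟩

/-- strongly 2-homogeneous cocycles are exactly the `(½ℤ)/ℤ`-valued
coboundaries, for `k ≥ 3`.  A `k`-cocycle `ρ` on `𝔽₂ⁿ` taking values in the
`2`-torsion subgroup `(½ℤ)/ℤ ⊆ 𝕋` is a coboundary with values in `(½ℤ)/ℤ` iff it is
strongly `2`-homogeneous, i.e. `ρ = d^k ψ` for some `ψ : C¹(𝔽₂ⁿ) → 𝕋` with `2ψ` a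
polynomial of degree at most `k-2` on the space of 1-cubes. -/
theorem strongly_two_homogeneous_iff_coboundary
    (n k : ℕ) (hk : 3 ≤ k) (ρ : (Fin (k + 1) → Gn n) → Gn n → 𝕋)
    (htors : ∀ (h : Fin (k + 1) → Gn n) (x : Gn n), (2 : ℤ) • ρ h x = 0)
    (hsymm : ∀ (h : Fin (k + 1) → Gn n) (σ : Equiv.Perm (Fin (k + 1))), ρ (h ∘ σ) = ρ h)
    (hcoc : ∀ (h : Fin (k + 1) → Gn n) (h' : Gn n),
      ρ (Function.update h 0 (h 0 + h')) =
        ρ h + (fun x => ρ (Function.update h 0 h') (x + h 0))) :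
    (∃ F : Gn n → 𝕋, (∀ x, (2 : ℤ) • F x = 0) ∧ ∀ h, ρ h = delIter h F) ↔
    (∃ ψ : Gn n → Gn n → 𝕋,
      (∀ (h : Fin k → Gn n) (hl x : Gn n),
        ρ (Fin.snoc h hl) x =
          ∑ ω : Gn k, ((-1 : ℤ) ^ (k - ∑ i, (ω i).val)) •
            ψ (x + ∑ i, ω i • h i) (x + ∑ i, ω i • h i + hl)) ∧
      (∀ (h : Fin (k - 1) → Gn n) (hl x : Gn n),
        ∑ ω : Gn (k - 1), ((-1 : ℤ) ^ (∑ i, (ω i).val)) •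
          ((2 : ℤ) • ψ (x + ∑ i, ω i • h i) (x + ∑ i, ω i • h i + hl)) = 0)) :=
  strongly_two_homogeneous_iff_coboundary_general n k hk ρ hsymm hcoc
end

section
/- The explicit map ρ : C⁶(X₂) → (½ℤ)/ℤ defined in the context is a 5-cocycle on X₂: it satisfies ρ(Q∘σ) = ρ(Q) for every Q ∈ C⁶(X₂) and every permutation σ of the six coordinates of 𝔽₂⁶, and ρ(⟨x,z⟩) = ρ(⟨x,y⟩) + ρ(⟨y,z⟩) whenever x, y, z ∈ C⁵(X₂) are such that ⟨x,y⟩ and ⟨y,z⟩ lie in C⁶(X₂). -/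
open scoped BigOperators Classical

abbrev F2sq : Type := ZMod 2 × ZMod 2
/-- The standard basis vector `e_i` of `𝔽₂ⁿ`. -/
def bas {n : ℕ} (i : Fin n) : Gn n := fun t => if t = i then 1 else 0

/-- `Q : 𝔽₂ⁿ → 𝔽₂²` is an `n`-cube of `X₂ = 𝒟²(𝔽₂²)`, i.e. a pair of classical
quadratic polynomials. -/
def IsCubeX2 {n : ℕ} (Q : Gn n → F2sq) : Prop :=
  ∀ a b c : Gn n, del a (del b (del c Q)) = 0

/-- The coefficient `h_{ij} = ∂_{e_i}∂_{e_j} Q (0)` of a `6`-cube of `X₂`. -/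
def hcoef (Q : Gn 6 → F2sq) (i j : Fin 6) : F2sq :=
  del (bas i) (del (bas j) Q) 0

/-- The explicit cocycle `ρ : C⁶(X₂) → (½ℤ)/ℤ ⊆ 𝕋`:
`ρ(Q) = (1/2) Σ h⁽¹⁾_{ab} h⁽¹⁾_{cd} h⁽²⁾_{ef} mod 1`, where the sum ranges over the
45 partitions of `{1,…,6}` into three two-element sets `{a,b}, {c,d}, {e,f}`, with the
unordered pair `{{a,b},{c,d}}` together with `{e,f}` counted once (enforced by the
canonical ordering `a < b`, `c < d`, `e < f`, `a < c`). -/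
noncomputable def rho (Q : Gn 6 → F2sq) : 𝕋 :=
  ((((∑ a : Fin 6, ∑ b : Fin 6, ∑ c : Fin 6, ∑ d : Fin 6, ∑ e : Fin 6, ∑ f : Fin 6,
      if a < b ∧ c < d ∧ e < f ∧ a < c ∧ ({a, b, c, d, e, f} : Finset (Fin 6)) = Finset.univ
      then (((hcoef Q a b).1 * (hcoef Q c d).1 * (hcoef Q e f).2).val : ℤ)
      else 0 : ℤ) : ℝ) / 2 : ℝ) : 𝕋)

/-- The concatenation `⟨u,v⟩ : 𝔽₂⁵ × 𝔽₂ → 𝔽₂²` of two `5`-cubes along the last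
coordinate. -/
def concat6 (u v : Gn 5 → F2sq) : Gn 6 → F2sq :=
  fun ω => if ω (Fin.last 5) = 0 then u (fun i => ω i.castSucc) else v (fun i => ω i.castSucc)

/-! ρ only sees the mixed second differences `h_{ij}`, which for a quadratic map form a
symmetric matrix. Summing the defining monomial over all 720 orderings of `{0,…,5}` counts
each of the 45 partitions `2 · 2 · 2 · 2 = 16` times; this full sum is visibly invariant under
relabelling the coordinates, so ρ is as well (the division by 16 is done in `ℤ`, before
reducing mod 2).

For a concatenation `⟨u,v⟩`, the coefficients `h_{ij}` with `i, j < 5` are those of `u` (and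
also of `v`, since `⟨u,v⟩` is quadratic), while `h_{i5} = ∂_{e_i}v(0) - ∂_{e_i}u(0)`. In every
partition exactly one pair contains `5`, so each monomial is linear in that telescoping
coefficient and agrees on the two other factors for `⟨x,z⟩`, `⟨x,y⟩`, `⟨y,z⟩`. -/

open Equiv Finset

theorem Fin.snoc_add_snoc {α : Type*} [Add α] {n : ℕ} (a b : Fin n → α) (s t : α) :
    (Fin.snoc a s + Fin.snoc b t : Fin (n + 1) → α) = Fin.snoc (a + b) (s + t) := by
  ext i; cases i using Fin.lastCases <;> simp

theorem Fin.snoc_zero_zero {α : Type*} [Zero α] {n : ℕ} :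
    (Fin.snoc 0 0 : Fin (n + 1) → α) = 0 := by
  ext i; cases i using Fin.lastCases <;> simp

theorem Equiv.Perm.sum_eq_two_nsmul_sum_lt {α M : Type*} [Fintype α] [LinearOrder α]
    [AddCommMonoid M] (f : Perm α → M) (τ : Perm α) (i j : α) (hij : i ≠ j)
    (hτi : τ i = j) (hτj : τ j = i) (hf : ∀ π, f (π * τ) = f π) :
    ∑ π, f π = 2 • ∑ π, if π i < π j then f π else 0 := by
  have hsplit : ∀ π : Perm α,
      f π = (if π i < π j then f π else 0) + (if π j < π i then f π else 0) := by
    intro π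
    rcases lt_trichotomy (π i) (π j) with h | h | h
    · simp [h, h.not_gt]
    · exact absurd (π.injective h) hij
    · simp [h, h.not_gt]
  have hswap : ∑ π, (if π j < π i then f π else 0) = ∑ π, if π i < π j then f π else 0 :=
    Fintype.sum_equiv (Equiv.mulRight τ) _ _ fun π => by simp [Perm.mul_apply, hτi, hτj, hf]
  rw [Fintype.sum_congr _ _ hsplit, sum_add_distrib, hswap, two_nsmul]

def mixedCoef {n : ℕ} (Q : Gn n → F2sq) (i j : Fin n) : F2sq := del (bas i) (del (bas j) Q) 0

lemma hcoef_comm (Q : Gn 6 → F2sq) (i j : Fin 6) : hcoef Q i j = hcoef Q j i := by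
  simp only [hcoef, del, zero_add, add_comm (bas i)]
  abel

lemma hcoef_comp_perm (Q : Gn 6 → F2sq) (σ : Perm (Fin 6)) (i j : Fin 6) :
    hcoef (fun ω => Q (ω ∘ σ)) (σ i) (σ j) = hcoef Q i j := by
  have hbas : ∀ k, (bas (σ k) : Gn 6) ∘ σ = bas k := fun k => by
    ext t; simp [bas]
  simp only [hcoef, del, zero_add, Pi.add_comp, hbas, Pi.zero_comp]

lemma bas_castSucc_eq_snoc {n : ℕ} (i : Fin n) :
    (bas i.castSucc : Gn (n + 1)) = Fin.snoc (bas i) 0 := by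
  ext t; cases t using Fin.lastCases <;> simp [bas, (Fin.castSucc_lt_last _).ne']

lemma bas_last_eq_snoc {n : ℕ} : (bas (Fin.last n) : Gn (n + 1)) = Fin.snoc 0 1 := by
  ext t; cases t using Fin.lastCases <;> simp [bas, (Fin.castSucc_lt_last _).ne]

section Concat

variable (u v : Gn 5 → F2sq)

lemma concat6_snoc_zero (w : Gn 5) : concat6 u v (Fin.snoc w 0) = u w := by
  simp only [concat6, Fin.snoc_last, Fin.snoc_castSucc, if_pos]

lemma concat6_snoc_one (w : Gn 5) : concat6 u v (Fin.snoc w 1) = v w := by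
  simp only [concat6, Fin.snoc_last, Fin.snoc_castSucc, one_ne_zero, if_false]

lemma hcoef_concat6_castSucc (i j : Fin 5) :
    hcoef (concat6 u v) i.castSucc j.castSucc = mixedCoef u i j := by
  simp only [hcoef, mixedCoef, del, zero_add]
  rw [← Fin.snoc_zero_zero, bas_castSucc_eq_snoc, bas_castSucc_eq_snoc]
  simp only [Fin.snoc_add_snoc, add_zero, concat6_snoc_zero]

lemma hcoef_concat6_castSucc_last (i : Fin 5) :
    hcoef (concat6 u v) i.castSucc (Fin.last 5) = (v (bas i) - v 0) - (u (bas i) - u 0) := by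
  simp only [hcoef, del, zero_add]
  rw [← Fin.snoc_zero_zero, bas_castSucc_eq_snoc, bas_last_eq_snoc]
  simp only [Fin.snoc_add_snoc, add_zero, zero_add, concat6_snoc_zero, concat6_snoc_one]
  abel

lemma mixedCoef_eq_of_isCubeX2_concat6 (h : IsCubeX2 (concat6 u v)) (i j : Fin 5) :
    mixedCoef v i j = mixedCoef u i j := by
  have h0 := congrFun (h (bas i.castSucc) (bas j.castSucc) (bas (Fin.last 5))) 0
  simp only [del, zero_add, Pi.zero_apply] at h0
  rw [← Fin.snoc_zero_zero, bas_castSucc_eq_snoc, bas_castSucc_eq_snoc, bas_last_eq_snoc] at h0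
  simp only [Fin.snoc_add_snoc, add_zero, zero_add, concat6_snoc_zero, concat6_snoc_one] at h0
  simp only [mixedCoef, del, zero_add]
  linear_combination h0

lemma hcoef_concat6_of_ne_last {i j : Fin 6} (hi : i ≠ Fin.last 5) (hj : j ≠ Fin.last 5) :
    hcoef (concat6 u v) i j = mixedCoef u (i.castPred hi) (j.castPred hj) := by
  rw [← hcoef_concat6_castSucc, Fin.castSucc_castPred, Fin.castSucc_castPred]

lemma hcoef_concat6_last_add (x y z : Gn 5 → F2sq) {i : Fin 6} (hi : i ≠ Fin.last 5) :
    hcoef (concat6 x z) i (Fin.last 5) =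
      hcoef (concat6 x y) i (Fin.last 5) + hcoef (concat6 y z) i (Fin.last 5) := by
  rw [← Fin.castSucc_castPred i hi]
  simp only [hcoef_concat6_castSucc_last]
  abel

end Concat

def rhoTerm (Q : Gn 6 → F2sq) (π : Perm (Fin 6)) : ZMod 2 :=
  (hcoef Q (π 0) (π 1)).1 * (hcoef Q (π 2) (π 3)).1 * (hcoef Q (π 4) (π 5)).2

def IsCanonical (π : Perm (Fin 6)) : Prop := π 0 < π 1 ∧ π 2 < π 3 ∧ π 4 < π 5 ∧ π 0 < π 2

instance : DecidablePred IsCanonical := fun π => by unfold IsCanonical; infer_instance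

def rhoSum (Q : Gn 6 → F2sq) : ℤ :=
  ∑ π, if IsCanonical π then ((rhoTerm Q π).val : ℤ) else 0

lemma insert_apply_eq_univ (π : Perm (Fin 6)) :
    ({π 0, π 1, π 2, π 3, π 4, π 5} : Finset (Fin 6)) = univ := by
  refine eq_univ_of_forall fun y => ?_
  rw [← π.apply_symm_apply y]
  generalize π.symm y = k
  fin_cases k <;> simp

lemma exists_perm_of_insert_eq_univ {a b c d e f : Fin 6}
    (h : ({a, b, c, d, e, f} : Finset (Fin 6)) = univ) :
    ∃ π : Perm (Fin 6), π 0 = a ∧ π 1 = b ∧ π 2 = c ∧ π 3 = d ∧ π 4 = e ∧ π 5 = f := by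
  have hsurj : Function.Surjective ![a, b, c, d, e, f] := fun y => by
    have hy : y ∈ ({a, b, c, d, e, f} : Finset (Fin 6)) := h ▸ mem_univ y
    simp only [mem_insert, mem_singleton] at hy
    rcases hy with rfl | rfl | rfl | rfl | rfl | rfl
    exacts [⟨0, rfl⟩, ⟨1, rfl⟩, ⟨2, rfl⟩, ⟨3, rfl⟩, ⟨4, rfl⟩, ⟨5, rfl⟩]
  exact ⟨Equiv.ofBijective _ hsurj.bijective_of_finite, rfl, rfl, rfl, rfl, rfl, rfl⟩

lemma rhoSum_eq_sum_fin (Q : Gn 6 → F2sq) : rhoSum Q =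
    ∑ a : Fin 6, ∑ b : Fin 6, ∑ c : Fin 6, ∑ d : Fin 6, ∑ e : Fin 6, ∑ f : Fin 6,
      if a < b ∧ c < d ∧ e < f ∧ a < c ∧ ({a, b, c, d, e, f} : Finset (Fin 6)) = Finset.univ
      then (((hcoef Q a b).1 * (hcoef Q c d).1 * (hcoef Q e f).2).val : ℤ)
      else 0 := by
  simp only [← Fintype.sum_prod_type']
  refine Fintype.sum_of_injective (fun π : Perm (Fin 6) => (π 0, π 1, π 2, π 3, π 4, π 5))
    ?_ _ _ ?_ ?_
  · intro π π' h
    simp only [Prod.mk.injEq] at h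
    ext k; fin_cases k <;> simp [h]
  · rintro ⟨a, b, c, d, e, f⟩ hnot
    rw [if_neg]
    rintro ⟨-, -, -, -, h⟩
    obtain ⟨π, h0, h1, h2, h3, h4, h5⟩ := exists_perm_of_insert_eq_univ h
    exact hnot ⟨π, by simp [h0, h1, h2, h3, h4, h5]⟩
  · intro π
    simp only [IsCanonical, rhoTerm, insert_apply_eq_univ, and_true]

lemma rho_eq_toAddCircle (Q : Gn 6 → F2sq) :
    rho Q = ZMod.toAddCircle ((rhoSum Q : ℤ) : ZMod 2) := by
  rw [ZMod.toAddCircle_intCast, rho, rhoSum_eq_sum_fin, Nat.cast_ofNat]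

lemma sum_rhoTerm_eq_sixteen_mul_rhoSum (Q : Gn 6 → F2sq) :
    ∑ π, ((rhoTerm Q π).val : ℤ) = 16 * rhoSum Q := by
  rw [Perm.sum_eq_two_nsmul_sum_lt _ (swap 0 1) 0 1 (by decide) (by simp) (by simp) fun π => by
        simp [rhoTerm, Perm.mul_apply, swap_apply_of_ne_of_ne, hcoef_comm Q (π 1)],
      Perm.sum_eq_two_nsmul_sum_lt _ (swap 2 3) 2 3 (by decide) (by simp) (by simp) fun π => by
        simp [rhoTerm, Perm.mul_apply, swap_apply_of_ne_of_ne, hcoef_comm Q (π 3)],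
      Perm.sum_eq_two_nsmul_sum_lt _ (swap 4 5) 4 5 (by decide) (by simp) (by simp) fun π => by
        simp [rhoTerm, Perm.mul_apply, swap_apply_of_ne_of_ne, hcoef_comm Q (π 5)],
      Perm.sum_eq_two_nsmul_sum_lt _ (swap 0 2 * swap 1 3) 0 2 (by decide) (by decide) (by decide)
        fun π => by
          simp only [rhoTerm, Perm.mul_apply, swap_apply_left, swap_apply_right,
            swap_apply_of_ne_of_ne, ne_eq, Fin.reduceEq, not_false_eq_true,
            mul_comm (hcoef Q (π 2) (π 3)).1]
          split_ifs <;> rfl]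
  have hcanon : ∑ π : Perm (Fin 6), (if π 0 < π 2 then if π 4 < π 5 then if π 2 < π 3 then
      if π 0 < π 1 then ((rhoTerm Q π).val : ℤ) else 0 else 0 else 0 else 0) = rhoSum Q :=
    Fintype.sum_congr _ _ fun π => by simp only [IsCanonical]; split_ifs <;> simp_all
  rw [hcanon]
  simp only [nsmul_eq_mul, Nat.cast_ofNat]
  ring

lemma rhoSum_comp_perm (Q : Gn 6 → F2sq) (σ : Perm (Fin 6)) :
    rhoSum (fun ω => Q (ω ∘ σ)) = rhoSum Q := by
  have h16 : ∑ π, ((rhoTerm (fun ω => Q (ω ∘ σ)) π).val : ℤ) = ∑ π, ((rhoTerm Q π).val : ℤ) :=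
    (Fintype.sum_equiv (Equiv.mulLeft σ) _ _ fun π => by
      simp only [rhoTerm, coe_mulLeft, Perm.mul_apply, hcoef_comp_perm]).symm
  rw [sum_rhoTerm_eq_sixteen_mul_rhoSum, sum_rhoTerm_eq_sixteen_mul_rhoSum] at h16
  omega

lemma intCast_rhoSum (Q : Gn 6 → F2sq) :
    ((rhoSum Q : ℤ) : ZMod 2) = ∑ π, if IsCanonical π then rhoTerm Q π else 0 := by
  simp only [rhoSum, Int.cast_sum, apply_ite Int.cast, ZMod.natCast_val, ZMod.intCast_cast,
    ZMod.cast_id', id_eq, Int.cast_zero]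

lemma rhoTerm_concat6 {x y : Gn 5 → F2sq} (z : Gn 5 → F2sq) (hxy : IsCubeX2 (concat6 x y))
    {π : Perm (Fin 6)} (hπ : IsCanonical π) :
    rhoTerm (concat6 x z) π = rhoTerm (concat6 x y) π + rhoTerm (concat6 y z) π := by
  have shared : ∀ {i j}, i ≠ Fin.last 5 → j ≠ Fin.last 5 →
      hcoef (concat6 x z) i j = hcoef (concat6 x y) i j ∧
        hcoef (concat6 y z) i j = hcoef (concat6 x y) i j := fun hi hj => by
    simp only [hcoef_concat6_of_ne_last _ _ hi hj, mixedCoef_eq_of_isCubeX2_concat6 _ _ hxy,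
      and_self]
  obtain ⟨k, hk⟩ := π.surjective (Fin.last 5)
  have hne : ∀ l, l ≠ k → π l ≠ Fin.last 5 := fun l hl => hk ▸ π.injective.ne hl
  obtain ⟨h01, h23, h45, -⟩ := hπ
  -- `5` is the largest index, so in a canonical ordering it closes one of the three pairs.
  fin_cases k
  · exact absurd (hk ▸ h01) (Fin.le_last _).not_gt
  · obtain ⟨h23z, h23y⟩ := shared (hne 2 (by decide)) (hne 3 (by decide))
    obtain ⟨h45z, h45y⟩ := shared (hne 4 (by decide)) (hne 5 (by decide))
    rw [rhoTerm, rhoTerm, rhoTerm, show π 1 = _ from hk,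
      hcoef_concat6_last_add x y z (hne 0 (by decide)), h23z, h23y, h45z, h45y, Prod.fst_add]
    ring
  · exact absurd (hk ▸ h23) (Fin.le_last _).not_gt
  · obtain ⟨h01z, h01y⟩ := shared (hne 0 (by decide)) (hne 1 (by decide))
    obtain ⟨h45z, h45y⟩ := shared (hne 4 (by decide)) (hne 5 (by decide))
    rw [rhoTerm, rhoTerm, rhoTerm, show π 3 = _ from hk,
      hcoef_concat6_last_add x y z (hne 2 (by decide)), h01z, h01y, h45z, h45y, Prod.fst_add]
    ring
  · exact absurd (hk ▸ h45) (Fin.le_last _).not_gt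
  · obtain ⟨h01z, h01y⟩ := shared (hne 0 (by decide)) (hne 1 (by decide))
    obtain ⟨h23z, h23y⟩ := shared (hne 2 (by decide)) (hne 3 (by decide))
    rw [rhoTerm, rhoTerm, rhoTerm, show π 5 = _ from hk,
      hcoef_concat6_last_add x y z (hne 4 (by decide)), h01z, h01y, h23z, h23y, Prod.snd_add]
    ring

lemma intCast_rhoSum_concat6 {x y : Gn 5 → F2sq} (z : Gn 5 → F2sq)
    (hxy : IsCubeX2 (concat6 x y)) :
    ((rhoSum (concat6 x z) : ℤ) : ZMod 2) = rhoSum (concat6 x y) + rhoSum (concat6 y z) := by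
  simp only [intCast_rhoSum, ← sum_add_distrib]
  refine Fintype.sum_congr _ _ fun π => ?_
  split_ifs with hπ
  · exact rhoTerm_concat6 z hxy hπ
  · rw [add_zero]

/-- the explicit map `ρ : C⁶(X₂) → (½ℤ)/ℤ` is a `5`-cocycle on `X₂`:
it is invariant under permutations of the six coordinates, and satisfies the cocycle
identity with respect to concatenations of `5`-cubes. -/
theorem rho_is_five_cocycle :
    (∀ (Q : Gn 6 → F2sq), IsCubeX2 Q → ∀ σ : Equiv.Perm (Fin 6),
      rho (fun ω => Q (ω ∘ σ)) = rho Q) ∧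
    (∀ x y z : Gn 5 → F2sq, IsCubeX2 x → IsCubeX2 y → IsCubeX2 z →
      IsCubeX2 (concat6 x y) → IsCubeX2 (concat6 y z) →
      rho (concat6 x z) = rho (concat6 x y) + rho (concat6 y z)) := by
  refine ⟨fun Q _ σ => ?_, fun x y z _ _ _ hxy _ => ?_⟩
  · rw [rho_eq_toAddCircle, rho_eq_toAddCircle, rhoSum_comp_perm]
  · rw [rho_eq_toAddCircle, rho_eq_toAddCircle, rho_eq_toAddCircle, ← map_add,
      intCast_rhoSum_concat6 z hxy]
end

section
/- The explicit map ρ : C⁶(X₂) → (½ℤ)/ℤ defined in the context is not a 5-coboundary with values in 𝕋: there is no function F : 𝔽₂² → 𝕋 such that ρ(Q) = Σ_{ω∈{0,1}⁶} (−1)^{6−|ω|} F(Q(ω)) for every Q ∈ C⁶(X₂). -/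
open scoped BigOperators Classical

/-- An explicit pair of classical quadratic polynomials used as a counterexample cube. -/
def Qex : Gn 6 → F2sq :=
  fun ω => (ω 1 * ω 4 + ω 0 * ω 1 + ω 3 * ω 4 + ω 4,
            ω 2 * ω 3 + ω 0 * ω 1 + ω 3 * ω 5 + ω 2 * ω 5)

lemma Qex_isCube : IsCubeX2 Qex := by
  intro a b c
  funext x
  simp only [del, Qex, Prod.mk_sub_mk, Pi.add_apply, Pi.zero_apply,
    Prod.ext_iff, Prod.fst_zero, Prod.snd_zero]
  constructor <;> ring

lemma Qex_fiber : ∀ x : F2sq,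
    (∑ ω ∈ Finset.univ.filter (fun ω : Gn 6 => Qex ω = x),
      ((-1 : ℤ) ^ (6 - ∑ i, (ω i).val))) = 0 := by decide

set_option maxHeartbeats 8000000 in
lemma Qex_rho_sum :
    (∑ a : Fin 6, ∑ b : Fin 6, ∑ c : Fin 6, ∑ d : Fin 6, ∑ e : Fin 6, ∑ f : Fin 6,
      if a < b ∧ c < d ∧ e < f ∧ a < c ∧ ({a, b, c, d, e, f} : Finset (Fin 6)) = Finset.univ
      then (((hcoef Qex a b).1 * (hcoef Qex c d).1 * (hcoef Qex e f).2).val : ℤ)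
      else 0 : ℤ) = 1 := by decide

/-- the explicit map `ρ : C⁶(X₂) → (½ℤ)/ℤ` is not a `5`-coboundary
with values in `𝕋`: there is no `F : 𝔽₂² → 𝕋` with
`ρ(Q) = Σ_{ω ∈ {0,1}⁶} (-1)^{6-|ω|} F(Q(ω))` for all `Q ∈ C⁶(X₂)`. -/
theorem rho_is_not_coboundary :
    ¬ ∃ F : F2sq → 𝕋, ∀ Q : Gn 6 → F2sq, IsCubeX2 Q →
      rho Q = ∑ ω : Gn 6, ((-1 : ℤ) ^ (6 - ∑ i, (ω i).val)) • F (Q ω) := by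
  rintro ⟨F, hF⟩
  have h := hF Qex Qex_isCube
  have hRHS : (∑ ω : Gn 6, ((-1 : ℤ) ^ (6 - ∑ i, (ω i).val)) • F (Qex ω)) = 0 := by
    rw [← Finset.sum_fiberwise Finset.univ (fun ω : Gn 6 => Qex ω)
        (fun ω : Gn 6 => ((-1 : ℤ) ^ (6 - ∑ i, (ω i).val)) • F (Qex ω))]
    refine Finset.sum_eq_zero fun x _ => ?_
    have : (∑ ω ∈ Finset.univ.filter (fun ω : Gn 6 => Qex ω = x),
        ((-1 : ℤ) ^ (6 - ∑ i, (ω i).val)) • F (Qex ω))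
        = (∑ ω ∈ Finset.univ.filter (fun ω : Gn 6 => Qex ω = x),
            ((-1 : ℤ) ^ (6 - ∑ i, (ω i).val))) • F x := by
      rw [Finset.sum_smul]
      refine Finset.sum_congr rfl fun ω hω => ?_
      rw [(Finset.mem_filter.mp hω).2]
    rw [this, Qex_fiber x, zero_smul]
  rw [hRHS, rho, Qex_rho_sum] at h
  have h2 : (((1 : ℝ) / 2 : ℝ) : 𝕋) = 0 := by
    simpa using h
  rw [AddCircle.coe_eq_zero_iff] at h2
  obtain ⟨n, hn⟩ := h2
  have hn' : (n : ℝ) = 1 / 2 := by simpa using hn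
  have : ((2 * n : ℤ) : ℝ) = ((1 : ℤ) : ℝ) := by push_cast; linarith
  have := Int.cast_injective this
  omega
end

section
/- Let n ≥ 1, let e be a nonzero vector in 𝔽₂ⁿ, let d ≥ 0, and let P : 𝔽₂ⁿ → 𝕋 be a polynomial of degree at most d with ∂_e P = 0. Then there exists a polynomial Q : 𝔽₂ⁿ → 𝕋 of degree at most d+1 such that P = Q + T^e Q. -/
open scoped BigOperators Classical

namespace St18

variable {n : ℕ}

lemma zmod2_cases (a : ZMod 2) : a = 0 ∨ a = 1 := by revert a; decide

lemma zmod2_add_self (a : ZMod 2) : a + a = 0 := by revert a; decide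

lemma gn_add_self (x : Gn n) : x + x = 0 := by
  funext j; exact zmod2_add_self (x j)

/-! ### del basics -/

lemma del_apply (g : Gn n) (F : Gn n → 𝕋) (x : Gn n) : del g F x = F (x + g) - F x := rfl

lemma del_add (g : Gn n) (F G : Gn n → 𝕋) :
    del g (fun x => F x + G x) = fun x => del g F x + del g G x := by
  funext x; simp only [del]; abel

lemma del_zsmul (g : Gn n) (c : ℤ) (F : Gn n → 𝕋) :
    del g (fun x => c • F x) = fun x => c • del g F x := by
  funext x; simp only [del, smul_sub]

lemma del_sh (h g : Gn n) (F : Gn n → 𝕋) :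
    del h (fun x => F (x + g)) = fun x => del h F (x + g) := by
  funext x
  show F (x + h + g) - F (x + g) = F (x + g + h) - F (x + g)
  rw [add_right_comm]

lemma del_comp (τ : Gn n → Gn n) (hτ : ∀ a b, τ (a + b) = τ a + τ b) (h : Gn n)
    (F : Gn n → 𝕋) :
    del h (fun x => F (τ x)) = fun x => del (τ h) F (τ x) := by
  funext x
  show F (τ (x + h)) - F (τ x) = F (τ x + τ h) - F (τ x)
  rw [hτ]

lemma del_zero_fun (g : Gn n) : del g (0 : Gn n → 𝕋) = 0 := by
  funext x; simp [del]

lemma del_comm (g h : Gn n) (F : Gn n → 𝕋) : del g (del h F) = del h (del g F) := by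
  funext x
  show (F (x + g + h) - F (x + g)) - (F (x + h) - F x)
      = (F (x + h + g) - F (x + h)) - (F (x + g) - F x)
  rw [add_right_comm]
  abel

/-! ### foldr lemmas -/

lemma foldr_del_add (l : List (Gn n)) (F G : Gn n → 𝕋) :
    l.foldr del (fun x => F x + G x) = fun x => l.foldr del F x + l.foldr del G x := by
  induction l with
  | nil => rfl
  | cons a l ih =>
    show del a (l.foldr del fun x => F x + G x) = _
    rw [ih, del_add]
    rfl

lemma foldr_del_zsmul (l : List (Gn n)) (c : ℤ) (F : Gn n → 𝕋) :
    l.foldr del (fun x => c • F x) = fun x => c • l.foldr del F x := by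
  induction l with
  | nil => rfl
  | cons a l ih =>
    show del a (l.foldr del fun x => c • F x) = _
    rw [ih, del_zsmul]
    rfl

lemma foldr_del_sh (l : List (Gn n)) (g : Gn n) (F : Gn n → 𝕋) :
    l.foldr del (fun x => F (x + g)) = fun x => l.foldr del F (x + g) := by
  induction l with
  | nil => rfl
  | cons a l ih =>
    show del a (l.foldr del fun x => F (x + g)) = _
    rw [ih, del_sh]
    rfl

lemma foldr_del_comp (l : List (Gn n)) (τ : Gn n → Gn n)
    (hτ : ∀ a b, τ (a + b) = τ a + τ b) (F : Gn n → 𝕋) :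
    l.foldr del (fun x => F (τ x)) = fun x => (l.map τ).foldr del F (τ x) := by
  induction l with
  | nil => rfl
  | cons a l ih =>
    show del a (l.foldr del fun x => F (τ x)) = _
    rw [ih, del_comp τ hτ]
    rfl

/-! ### delIter structure -/

lemma delIter_one (h : Fin 1 → Gn n) (F : Gn n → 𝕋) : delIter h F = del (h 0) F := by
  simp [delIter, List.ofFn_succ]

lemma delIter_head {m : ℕ} (h : Fin (m + 1) → Gn n) (F : Gn n → 𝕋) :
    delIter h F = del (h 0) (delIter (fun j => h j.succ) F) := by
  rw [delIter, List.ofFn_succ]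
  rfl

lemma delIter_snoc {m : ℕ} (h : Fin m → Gn n) (g : Gn n) (F : Gn n → 𝕋) :
    delIter (Fin.snoc h g) F = delIter h (del g F) := by
  rw [delIter, List.ofFn_succ']
  simp only [Fin.snoc_castSucc, Fin.snoc_last, List.concat_eq_append, List.foldr_append]
  rfl

lemma isPolyN_zero_iff {F : Gn n → 𝕋} : IsPolyN 0 F ↔ ∀ g, del g F = 0 := by
  constructor
  · intro hF g
    have := hF (fun _ => g)
    rwa [delIter_one] at this
  · intro H h
    rw [delIter_one]
    exact H _

lemma isPolyN_succ_iff {k : ℕ} {F : Gn n → 𝕋} :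
    IsPolyN (k + 1) F ↔ ∀ g, IsPolyN k (del g F) := by
  constructor
  · intro hF g h
    have := hF (Fin.snoc h g)
    rwa [delIter_snoc] at this
  · intro H h
    have h1 : h = Fin.snoc (Fin.init h) (h (Fin.last _)) := (Fin.snoc_init_self h).symm
    rw [h1, delIter_snoc]
    exact H _ _

/-! ### IsPolyN closure -/

lemma isPolyN_congr {k : ℕ} {F G : Gn n → 𝕋} (h : ∀ x, F x = G x) (hF : IsPolyN k F) :
    IsPolyN k G := by
  have : F = G := funext h
  rwa [← this]

lemma isPolyN_addfun {k : ℕ} {F G : Gn n → 𝕋} (hF : IsPolyN k F) (hG : IsPolyN k G) :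
    IsPolyN k (fun x => F x + G x) := by
  intro h
  show (List.ofFn h).foldr del _ = 0
  rw [foldr_del_add]
  have h1 : (List.ofFn h).foldr del F = 0 := hF h
  have h2 : (List.ofFn h).foldr del G = 0 := hG h
  funext x
  rw [show (List.ofFn h).foldr del F x = 0 from congrFun h1 x,
    show (List.ofFn h).foldr del G x = 0 from congrFun h2 x]
  simp

lemma isPolyN_zsmulfun {k : ℕ} (c : ℤ) {F : Gn n → 𝕋} (hF : IsPolyN k F) :
    IsPolyN k (fun x => c • F x) := by
  intro h
  show (List.ofFn h).foldr del _ = 0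
  rw [foldr_del_zsmul]
  have h1 : (List.ofFn h).foldr del F = 0 := hF h
  funext x
  rw [show (List.ofFn h).foldr del F x = 0 from congrFun h1 x]
  simp

lemma isPolyN_shfun {k : ℕ} (g : Gn n) {F : Gn n → 𝕋} (hF : IsPolyN k F) :
    IsPolyN k (fun x => F (x + g)) := by
  intro h
  show (List.ofFn h).foldr del _ = 0
  rw [foldr_del_sh]
  have h1 : (List.ofFn h).foldr del F = 0 := hF h
  funext x
  rw [show (List.ofFn h).foldr del F (x + g) = 0 from congrFun h1 (x + g)]
  rfl

lemma isPolyN_compfun {k : ℕ} (τ : Gn n → Gn n) (hτ : ∀ a b, τ (a + b) = τ a + τ b)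
    {F : Gn n → 𝕋} (hF : IsPolyN k F) : IsPolyN k (fun x => F (τ x)) := by
  intro h
  show (List.ofFn h).foldr del _ = 0
  rw [foldr_del_comp _ τ hτ]
  have hmap : (List.ofFn h).map τ = List.ofFn (fun j => τ (h j)) := by
    rw [List.map_ofFn]
    rfl
  rw [hmap]
  have h1 : (List.ofFn fun j => τ (h j)).foldr del F = 0 := hF _
  funext x
  rw [show (List.ofFn fun j => τ (h j)).foldr del F (τ x) = 0 from congrFun h1 (τ x)]
  rfl

lemma isPolyN_succfun {k : ℕ} {F : Gn n → 𝕋} (hF : IsPolyN k F) : IsPolyN (k + 1) F := by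
  intro h
  rw [delIter_head]
  have : delIter (fun j => h j.succ) F = 0 := hF _
  rw [this, del_zero_fun]

lemma isPolyN_mono {k m : ℕ} {F : Gn n → 𝕋} (hF : IsPolyN k F) (hkm : k ≤ m) :
    IsPolyN m F := by
  induction m, hkm using Nat.le_induction with
  | base => exact hF
  | succ m hm ih => exact isPolyN_succfun ih

lemma isPolyN_const (k : ℕ) (c : 𝕋) : IsPolyN k (fun _ : Gn n => c) := by
  have h0 : IsPolyN 0 (fun _ : Gn n => c) := by
    rw [isPolyN_zero_iff]
    intro g
    funext x
    simp [del]
  exact isPolyN_mono h0 (Nat.zero_le k)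

lemma apply_eq_of_isPolyN_zero {F : Gn n → 𝕋} (hF : IsPolyN 0 F) (x : Gn n) : F x = F 0 := by
  have := congrFun (isPolyN_zero_iff.mp hF x) 0
  simp only [del, zero_add, Pi.zero_apply] at this
  exact sub_eq_zero.mp this

/-! ### Torsion -/

lemma torsion : ∀ (k : ℕ) (F : Gn n → 𝕋), IsPolyN k F → ∀ x, (2 : ℤ) ^ k • (F x - F 0) = 0 := by
  intro k
  induction k with
  | zero =>
    intro F hF x
    rw [apply_eq_of_isPolyN_zero hF x]
    simp
  | succ k ih =>
    intro F hF x
    have key : ∀ y g, (2 : ℤ) ^ k • (F (y + g) - F y) = (2 : ℤ) ^ k • (F g - F 0) := by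
      intro y g
      have h1 := ih (del g F) (isPolyN_succ_iff.mp hF g) y
      have h2 : del g F y = F (y + g) - F y := rfl
      have h3 : del g F 0 = F g - F 0 := by simp [del]
      rw [h2, h3, smul_sub] at h1
      exact sub_eq_zero.mp h1
    have hx : (2 : ℤ) ^ k • (F 0 - F x) = (2 : ℤ) ^ k • (F x - F 0) := by
      have := key x x
      rwa [gn_add_self] at this
    have e1 : (2 : ℤ) ^ (k + 1) • (F x - F 0)
        = (2 : ℤ) ^ k • (F x - F 0) + (2 : ℤ) ^ k • (F x - F 0) := by
      rw [show ((2 : ℤ) ^ (k + 1)) = 2 ^ k + 2 ^ k by ring, add_smul]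
    rw [e1]
    nth_rewrite 2 [← hx]
    rw [← smul_add]
    simp

lemma torsion_del {k : ℕ} {F : Gn n → 𝕋} (hF : IsPolyN k F) (g x : Gn n) :
    (2 : ℤ) ^ k • del g F x = 0 := by
  have h1 := torsion k F hF (x + g)
  have h2 := torsion k F hF x
  have h3 : del g F x = (F (x + g) - F 0) - (F x - F 0) := by
    show F (x + g) - F x = _
    abel
  rw [h3, smul_sub, h1, h2, sub_zero]

lemma isPolyN_two_smul : ∀ (k : ℕ) (F : Gn n → 𝕋), IsPolyN (k + 1) F →
    IsPolyN k (fun x => (2 : ℤ) • F x) := by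
  intro k
  induction k with
  | zero =>
    intro F hF
    rw [isPolyN_zero_iff]
    intro g
    funext x
    show (2 : ℤ) • F (x + g) - (2 : ℤ) • F x = (0 : Gn n → 𝕋) x
    rw [← smul_sub]
    have := torsion_del hF g x
    rw [pow_one] at this
    rw [show F (x + g) - F x = del g F x from rfl, this]
    rfl
  | succ k ih =>
    intro F hF
    rw [isPolyN_succ_iff]
    intro g
    rw [del_zsmul]
    exact ih _ (isPolyN_succ_iff.mp hF g)

/-! ### Good predicate -/

def Good (k : ℕ) (F : Gn n → 𝕋) : Prop :=
  IsPolyN k F ∧ ∀ x, (2 : ℤ) ^ (k + 1) • F x = 0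

lemma good_congr {k : ℕ} {F G : Gn n → 𝕋} (h : ∀ x, F x = G x) (hF : Good k F) : Good k G := by
  have : F = G := funext h
  rwa [← this]

lemma Good.addfun {k : ℕ} {F G : Gn n → 𝕋} (hF : Good k F) (hG : Good k G) :
    Good k (fun x => F x + G x) := by
  refine ⟨isPolyN_addfun hF.1 hG.1, fun x => ?_⟩
  rw [smul_add, hF.2 x, hG.2 x, add_zero]

lemma Good.zsmulfun {k : ℕ} (c : ℤ) {F : Gn n → 𝕋} (hF : Good k F) :
    Good k (fun x => c • F x) := by
  refine ⟨isPolyN_zsmulfun c hF.1, fun x => ?_⟩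
  rw [smul_comm, hF.2 x, smul_zero]

lemma Good.subfun {k : ℕ} {F G : Gn n → 𝕋} (hF : Good k F) (hG : Good k G) :
    Good k (fun x => F x - G x) := by
  have := hF.addfun (hG.zsmulfun (-1))
  apply good_congr _ this
  intro x
  simp [sub_eq_add_neg]

lemma Good.shfun {k : ℕ} (g : Gn n) {F : Gn n → 𝕋} (hF : Good k F) :
    Good k (fun x => F (x + g)) := ⟨isPolyN_shfun g hF.1, fun x => hF.2 (x + g)⟩

lemma Good.compfun {k : ℕ} (τ : Gn n → Gn n) (hτ : ∀ a b, τ (a + b) = τ a + τ b)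
    {F : Gn n → 𝕋} (hF : Good k F) : Good k (fun x => F (τ x)) :=
  ⟨isPolyN_compfun τ hτ hF.1, fun x => hF.2 (τ x)⟩

lemma Good.delfun {k : ℕ} {F : Gn n → 𝕋} (hF : Good (k + 1) F) (g : Gn n) :
    Good k (del g F) :=
  ⟨isPolyN_succ_iff.mp hF.1 g, fun x => torsion_del hF.1 g x⟩

lemma Good.twofun {k : ℕ} {F : Gn n → 𝕋} (hF : Good (k + 1) F) :
    Good k (fun x => (2 : ℤ) • F x) := by
  refine ⟨isPolyN_two_smul k F hF.1, fun x => ?_⟩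
  rw [smul_smul, show ((2 : ℤ) ^ (k + 1) * 2) = 2 ^ (k + 1 + 1) by ring]
  exact hF.2 x

/-! ### The coordinate weight -/

def uu (i : Fin n) (x : Gn n) : ℤ := ((x i).val : ℤ)

lemma uu_add (i : Fin n) (x g : Gn n) :
    uu i (x + g) = uu i x + uu i g - 2 * (uu i x * uu i g) := by
  have : ∀ a b : ZMod 2, (((a + b).val : ℤ)) = (a.val : ℤ) + (b.val : ℤ)
      - 2 * ((a.val : ℤ) * (b.val : ℤ)) := by decide
  exact this (x i) (g i)

lemma uu_zero {i : Fin n} {x : Gn n} (h : x i = 0) : uu i x = 0 := by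
  show ((x i).val : ℤ) = 0
  rw [h]
  decide

lemma uu_one {i : Fin n} {x : Gn n} (h : x i = 1) : uu i x = 1 := by
  show ((x i).val : ℤ) = 1
  rw [h]
  decide

lemma form (i : Fin n) (g : Gn n) (v S : Gn n → 𝕋) :
    del g (fun x => v x + uu i x • S x) =
      fun x => (del g v x + uu i g • S (x + g))
        + uu i x • (del g S x - (2 * uu i g) • S (x + g)) := by
  funext x
  show (v (x + g) + uu i (x + g) • S (x + g)) - (v x + uu i x • S x)
      = ((v (x + g) - v x) + uu i g • S (x + g))
        + uu i x • ((S (x + g) - S x) - (2 * uu i g) • S (x + g))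
  rw [uu_add]
  module

/-! ### Multiplication lemma -/

lemma mul_lemma (i : Fin n) : ∀ (k : ℕ) (v S : Gn n → 𝕋), IsPolyN (k + 1) v → Good k S →
    IsPolyN (k + 1) (fun x => v x + uu i x • S x) := by
  intro k
  induction k with
  | zero =>
    intro v S hv hS
    rw [isPolyN_succ_iff]
    intro g
    rw [form]
    have hSc : ∀ y, S y = S 0 := apply_eq_of_isPolyN_zero hS.1
    have hS2 : ∀ y, (2 : ℤ) • S y = 0 := by
      intro y
      have := hS.2 y
      rwa [pow_one] at this
    have heq : ∀ x, (del g v x + uu i g • S (x + g))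
        + uu i x • (del g S x - (2 * uu i g) • S (x + g))
        = del g v x + uu i g • S 0 := by
      intro x
      have h1 : del g S x = 0 := by
        show S (x + g) - S x = 0
        rw [hSc (x + g), hSc x, sub_self]
      have h2 : (2 * uu i g) • S (x + g) = 0 := by
        rw [mul_comm, mul_smul, hS2, smul_zero]
      rw [h1, h2, hSc (x + g)]
      simp
    apply isPolyN_congr (fun x => (heq x).symm)
    rw [isPolyN_zero_iff]
    intro h
    funext x
    have h4 := congrFun (isPolyN_zero_iff.mp (isPolyN_succ_iff.mp hv g) h) x
    show (del g v (x + h) + uu i g • S 0) - (del g v x + uu i g • S 0) = (0 : Gn n → 𝕋) x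
    have h5 : (del g v (x + h) + uu i g • S 0) - (del g v x + uu i g • S 0)
        = del g v (x + h) - del g v x := by abel
    rw [h5]
    show del h (del g v) x = (0 : Gn n → 𝕋) x
    rw [h4]
  | succ k ih =>
    intro v S hv hS
    rw [isPolyN_succ_iff]
    intro g
    rw [form]
    have hv' : IsPolyN (k + 1) (fun x => del g v x + uu i g • S (x + g)) := by
      apply isPolyN_addfun
      · exact isPolyN_succ_iff.mp hv g
      · exact isPolyN_zsmulfun (uu i g) (isPolyN_shfun g hS.1)
    have hS' : Good k (fun x => del g S x - (2 * uu i g) • S (x + g)) := by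
      apply Good.subfun (hS.delfun g)
      have h2 : Good k (fun x => (2 : ℤ) • S (x + g)) := (hS.shfun g).twofun
      apply good_congr _ (h2.zsmulfun (uu i g))
      intro x
      rw [← mul_smul, mul_comm]
    exact ih _ _ hv' hS'

/-! ### Projections -/

def proj (v : Gn n) (i : Fin n) (x : Gn n) : Gn n := x + (x i) • v

lemma proj_addhom (v : Gn n) (i : Fin n) (a b : Gn n) :
    proj v i (a + b) = proj v i a + proj v i b := by
  show a + b + (a i + b i) • v = (a + (a i) • v) + (b + (b i) • v)
  rw [add_smul]
  abel

lemma proj_eq0 {v : Gn n} {i : Fin n} {x : Gn n} (hx : x i = 0) : proj v i x = x := by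
  show x + (x i) • v = x
  rw [hx, zero_smul, add_zero]

lemma proj_eq1 {v : Gn n} {i : Fin n} {x : Gn n} (hx : x i = 1) : proj v i x = x + v := by
  show x + (x i) • v = x + v
  rw [hx, one_smul]

lemma proj_shift {v : Gn n} {i : Fin n} (hv : v i = 1) (x : Gn n) :
    proj v i (x + v) = proj v i x := by
  rcases zmod2_cases (x i) with h0 | h1
  · have h1' : (x + v) i = 1 := by
      show x i + v i = 1
      rw [h0, hv, zero_add]
    rw [proj_eq1 h1', proj_eq0 h0, add_assoc, gn_add_self, add_zero]
  · have h0' : (x + v) i = 0 := by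
      show x i + v i = 0
      rw [h1, hv]
      exact zmod2_add_self 1
    rw [proj_eq0 h0', proj_eq1 h1]

def δ (i : Fin n) : Gn n := Pi.single i (1 : ZMod 2)

lemma δ_same (i : Fin n) : δ i i = 1 := Pi.single_eq_same i 1

lemma δ_ne {i j : Fin n} (h : j ≠ i) : δ i j = 0 := Pi.single_eq_of_ne h 1

/-! ### Constancy from invariance -/

lemma const_of_invariant (R : Gn n → 𝕋) (hR : ∀ i, del (δ i) R = 0) (x : Gn n) :
    R x = R 0 := by
  suffices h : ∀ t : Finset (Fin n), ∀ x : Gn n, (∀ j, x j ≠ 0 → j ∈ t) → R x = R 0 by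
    exact h Finset.univ x (fun j _ => Finset.mem_univ j)
  intro t
  induction t using Finset.induction_on with
  | empty =>
    intro x hx
    have : x = 0 := by
      funext j
      by_contra hj
      exact absurd (hx j hj) (Finset.notMem_empty j)
    rw [this]
  | @insert a t ha ih =>
    intro x hx
    rcases zmod2_cases (x a) with h0 | h1
    · apply ih
      intro j hj
      rcases Finset.mem_insert.mp (hx j hj) with rfl | h
      · exact absurd h0 hj
      · exact h
    · have key : R x = R (x + δ a) := by
        have hc := congrFun (hR a) (x + δ a)
        have h2 : x + δ a + δ a = x := by rw [add_assoc, gn_add_self, add_zero]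
        simp only [del, h2, Pi.zero_apply] at hc
        exact sub_eq_zero.mp hc
      rw [key]
      apply ih
      intro j hj
      by_cases hja : j = a
      · subst hja
        exfalso
        apply hj
        show x j + δ j j = 0
        rw [h1, δ_same]
        exact zmod2_add_self 1
      · have hxj : (x + δ a) j = x j := by
          show x j + δ a j = x j
          rw [δ_ne hja, add_zero]
        rcases Finset.mem_insert.mp (hx j (by rwa [hxj] at hj)) with rfl | h
        · exact absurd rfl hja
        · exact h

/-! ### Halving in the circle -/

lemma circle_half (c : 𝕋) : ∃ c' : 𝕋, (2 : ℤ) • c' = c := by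
  obtain ⟨r, hr⟩ := QuotientAddGroup.mk_surjective c
  refine ⟨QuotientAddGroup.mk (r / 2), ?_⟩
  rw [two_zsmul, ← QuotientAddGroup.mk_add]
  rw [← hr]
  norm_num

/-! ### The halving lemma -/

lemma halves (s : Finset (Fin n)) : ∀ (k : ℕ) (R : Gn n → 𝕋), Good k R →
    (∀ i, i ∉ s → del (δ i) R = 0) →
    ∃ R', (∀ x, (2 : ℤ) • R' x = R x) ∧ Good (k + 1) R' := by
  induction s using Finset.induction_on with
  | empty =>
    intro k R hR hinv
    have hc : ∀ x, R x = R 0 := const_of_invariant R (fun i => hinv i (Finset.notMem_empty i))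
    obtain ⟨c', hc'⟩ := circle_half (R 0)
    refine ⟨fun _ => c', fun x => by rw [hc', hc x], ?_⟩
    refine ⟨isPolyN_const (k + 1) c', fun x => ?_⟩
    rw [show ((2 : ℤ) ^ (k + 1 + 1)) = 2 ^ (k + 1) * 2 by ring, mul_smul, hc']
    exact hR.2 0
  | @insert i s hins ih =>
    intro k R hR hinv
    set τ0 : Gn n → Gn n := proj (δ i) i with hτ0
    have hτadd : ∀ a b, τ0 (a + b) = τ0 a + τ0 b := proj_addhom (δ i) i
    have hτshift : ∀ x, τ0 (x + δ i) = τ0 x := proj_shift (δ_same i)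
    -- A := R ∘ τ0, B := (del (δ i) R) ∘ τ0
    have hAinv : ∀ j, j ∉ s → del (δ j) (fun x => R (τ0 x)) = 0 := by
      intro j hj
      by_cases hji : j = i
      · subst hji
        funext x
        show R (τ0 (x + δ j)) - R (τ0 x) = 0
        rw [hτshift x, sub_self]
      · have hτj : ∀ x, τ0 (x + δ j) = τ0 x + δ j := by
          intro x
          show (x + δ j) + ((x + δ j) i) • δ i = (x + (x i) • δ i) + δ j
          have : (x + δ j) i = x i := by
            show x i + δ j i = x i
            rw [δ_ne (fun hh => hji hh.symm), add_zero]
          rw [this]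
          abel
        funext x
        show R (τ0 (x + δ j)) - R (τ0 x) = 0
        rw [hτj x]
        have := congrFun (hinv j (by simp [hji, hj])) (τ0 x)
        simpa [del] using this
    have hBinv : ∀ j, j ∉ s → del (δ j) (fun x => del (δ i) R (τ0 x)) = 0 := by
      intro j hj
      by_cases hji : j = i
      · subst hji
        funext x
        show del (δ j) R (τ0 (x + δ j)) - del (δ j) R (τ0 x) = 0
        rw [hτshift x, sub_self]
      · have hτj : ∀ x, τ0 (x + δ j) = τ0 x + δ j := by
          intro x
          show (x + δ j) + ((x + δ j) i) • δ i = (x + (x i) • δ i) + δ j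
          have : (x + δ j) i = x i := by
            show x i + δ j i = x i
            rw [δ_ne (fun hh => hji hh.symm), add_zero]
          rw [this]
          abel
        funext x
        show del (δ i) R (τ0 (x + δ j)) - del (δ i) R (τ0 x) = 0
        rw [hτj x]
        have hcomm : del (δ j) (del (δ i) R) = 0 := by
          rw [del_comm, hinv j (by simp [hji, hj]), del_zero_fun]
        have := congrFun hcomm (τ0 x)
        simpa [del] using this
    have hAgood : Good k (fun x => R (τ0 x)) := hR.compfun τ0 hτadd
    -- decomposition
    have hdecomp : ∀ x, R x = R (τ0 x) + uu i x • del (δ i) R (τ0 x) := by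
      intro x
      rcases zmod2_cases (x i) with h0 | h1
      · rw [show τ0 x = x from proj_eq0 h0, uu_zero h0, zero_smul, add_zero]
      · rw [show τ0 x = x + δ i from proj_eq1 h1, uu_one h1, one_smul]
        show R x = R (x + δ i) + (R ((x + δ i) + δ i) - R (x + δ i))
        rw [add_assoc, gn_add_self, add_zero]
        abel
    -- get halves via cases on k
    obtain ⟨A', hA'half, hA'good⟩ := ih k (fun x => R (τ0 x)) hAgood hAinv
    obtain ⟨B', hB'half, hB'good⟩ :
        ∃ B', (∀ x, (2 : ℤ) • B' x = del (δ i) R (τ0 x)) ∧ Good k B' := by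
      cases k with
      | zero =>
        have h1 : del (δ i) R = 0 := isPolyN_zero_iff.mp hR.1 (δ i)
        refine ⟨fun _ => 0, fun x => ?_, ?_⟩
        · rw [smul_zero, show del (δ i) R (τ0 x) = (0 : Gn n → 𝕋) (τ0 x) from by rw [h1],
            Pi.zero_apply]
        · exact ⟨isPolyN_const 0 0, fun x => by simp⟩
      | succ k' =>
        have hBgood : Good k' (fun x => del (δ i) R (τ0 x)) :=
          (hR.delfun (δ i)).compfun τ0 hτadd
        obtain ⟨B', h1, h2⟩ := ih k' (fun x => del (δ i) R (τ0 x)) hBgood hBinv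
        exact ⟨B', h1, h2⟩
    refine ⟨fun x => A' x + uu i x • B' x, ?_, ?_, ?_⟩
    · intro x
      rw [smul_add, hA'half x, smul_comm, hB'half x, ← hdecomp x]
    · exact mul_lemma i (k) A' B' hA'good.1 hB'good
    · intro x
      rw [smul_add, hA'good.2 x,
        smul_comm ((2 : ℤ) ^ (k + 1 + 1)) (uu i x) (B' x),
        show ((2 : ℤ) ^ (k + 1 + 1)) = 2 * 2 ^ (k + 1) by ring,
        mul_smul, hB'good.2 x]
      simp

end St18

/-- Inverting `1 + T^e`.  If `P : 𝔽₂ⁿ → 𝕋` is a polynomial of degree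
at most `d` with `∂_e P = 0` for some nonzero `e`, then `P = (1 + T^e) Q` for some
polynomial `Q` of degree at most `d + 1`. -/
theorem inverting_one_add_shift
    (n : ℕ) (hn : 1 ≤ n) (e : Gn n) (he : e ≠ 0) (d : ℕ) (P : Gn n → 𝕋)
    (hP : IsPolyN d P) (hinv : del e P = 0) :
    ∃ Q : Gn n → 𝕋, IsPolyN (d + 1) Q ∧ ∀ x, P x = Q x + Q (x + e) := by
  classical
  have hex : ∃ i, e i ≠ 0 := by
    by_contra h
    push_neg at h
    exact he (funext fun i => h i)
  obtain ⟨i, hi⟩ := hex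
  have hei : e i = 1 := by
    rcases St18.zmod2_cases (e i) with h0 | h1
    · exact absurd h0 hi
    · exact h1
  have hgood : St18.Good d (fun x => P x - P 0) := by
    constructor
    · exact St18.isPolyN_congr (fun x => (sub_eq_add_neg (P x) (P 0)).symm)
        (St18.isPolyN_addfun hP (St18.isPolyN_const d (-(P 0))))
    · intro x
      rw [show ((2 : ℤ) ^ (d + 1)) = 2 * 2 ^ d by ring, mul_smul,
        St18.torsion d P hP x, smul_zero]
  obtain ⟨R', hhalf, hgood'⟩ := St18.halves Finset.univ d (fun x => P x - P 0) hgood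
    (fun j hj => absurd (Finset.mem_univ j) hj)
  obtain ⟨c', hc'⟩ := St18.circle_half (P 0)
  set τ : Gn n → Gn n := St18.proj e i with hτ
  refine ⟨fun x => c' + R' (τ x), ?_, ?_⟩
  · exact St18.isPolyN_addfun (St18.isPolyN_const (d + 1) c')
      (St18.isPolyN_compfun τ (St18.proj_addhom e i) hgood'.1)
  · intro x
    have hτe : τ (x + e) = τ x := St18.proj_shift hei x
    have hPinv : ∀ y, P (y + e) = P y := by
      intro y
      have h1 := congrFun hinv y
      have h2 : P (y + e) - P y = 0 := h1
      exact sub_eq_zero.mp h2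
    have hPτ : P (τ x) = P x := by
      rcases St18.zmod2_cases (x i) with h0 | h1
      · rw [show τ x = x from St18.proj_eq0 h0]
      · rw [show τ x = x + e from St18.proj_eq1 h1, hPinv x]
    show P x = (c' + R' (τ x)) + (c' + R' (τ (x + e)))
    calc P x = P (τ x) := hPτ.symm
    _ = P 0 + (P (τ x) - P 0) := by abel
    _ = (2 : ℤ) • c' + (2 : ℤ) • R' (τ x) := by rw [hc', hhalf (τ x)]
    _ = (c' + R' (τ x)) + (c' + R' (τ (x + e))) := by
        rw [hτe, two_zsmul, two_zsmul]
        abel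
end
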